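/- arXiv:2205.12173 — 8 statements merged into one kernel-verified Lean document; each statement's English description precedes it below -/
import Mathlib

section
/- If f < n/2, then the Minimum Diameter Averaging rule MDA is an (f, λ)-resilient averaging rule with λ = 2f/(n−f). That is, for any x₁,…,xₙ ∈ ℝ^d and any S ⊆ {1,…,n} with |S| = n−f, ‖MDA(x₁,…,xₙ) − x̄_S‖ ≤ (2f/(n−f)) · max_{i,j∈S} ‖xᵢ − xⱼ‖. -/
/-- Diameter of the family `x` over the index set `S`. -/
noncomputable def diam {n d : ℕ} (x : Fin n → EuclideanSpace ℝ (Fin d))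
    (S : Finset (Fin n)) : ℝ :=
  (((S ×ˢ S).sup fun p => ‖x p.1 - x p.2‖₊ : NNReal) : ℝ)

set_option maxHeartbeats 1000000 in
lemma le_diam {n d : ℕ} (x : Fin n → EuclideanSpace ℝ (Fin d))
    {S : Finset (Fin n)} {i j : Fin n} (hi : i ∈ S) (hj : j ∈ S) :
    ‖x i - x j‖ ≤ diam x S := by
  have hmem : (i, j) ∈ S ×ˢ S := Finset.mem_product.mpr ⟨hi, hj⟩
  have h : (fun p : Fin n × Fin n => ‖x p.1 - x p.2‖₊) (i, j)
      ≤ (S ×ˢ S).sup fun p => ‖x p.1 - x p.2‖₊ :=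
    Finset.le_sup (f := fun p : Fin n × Fin n => ‖x p.1 - x p.2‖₊) hmem
  simpa [diam] using (NNReal.coe_le_coe.mpr h)

lemma diam_nonneg {n d : ℕ} (x : Fin n → EuclideanSpace ℝ (Fin d))
    (S : Finset (Fin n)) : 0 ≤ diam x S := NNReal.coe_nonneg _

/-- MDA is `(f, 2f/(n-f))`-resilient averaging when `f < n/2`. -/
theorem mda_resilient (n f d : ℕ) (hfn : 2 * f < n)
    (x : Fin n → EuclideanSpace ℝ (Fin d))
    (Sstar : Finset (Fin n)) (hSstar : Sstar.card = n - f)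
    (hmin : ∀ T : Finset (Fin n), T.card = n - f → diam x Sstar ≤ diam x T)
    (S : Finset (Fin n)) (hS : S.card = n - f) :
    ‖(((n : ℝ) - f)⁻¹ • ∑ i ∈ Sstar, x i) - (S.card : ℝ)⁻¹ • ∑ i ∈ S, x i‖
      ≤ (2 * (f : ℝ) / ((n : ℝ) - f)) * diam x S := by
  have hf_lt : f < n := by omega
  have hmr : ((n : ℝ) - f) = ((n - f : ℕ) : ℝ) := by
    rw [Nat.cast_sub hf_lt.le]
  have hm_pos : 0 < ((n - f : ℕ) : ℝ) := by
    have : 0 < n - f := by omega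
    exact_mod_cast this
  set D := diam x S with hD
  have hD0 : 0 ≤ D := diam_nonneg x S
  -- nonempty intersection
  have hne : (Sstar ∩ S).Nonempty := by
    rw [← Finset.card_pos]
    have h1 := Finset.card_union_add_card_inter Sstar S
    have h2 : (Sstar ∪ S).card ≤ n := by
      simpa using Finset.card_le_univ (Sstar ∪ S)
    rw [hSstar, hS] at h1
    omega
  obtain ⟨j0, hj0⟩ := hne
  have hj0star : j0 ∈ Sstar := (Finset.mem_inter.mp hj0).1
  have hj0S : j0 ∈ S := (Finset.mem_inter.mp hj0).2
  set k := (Sstar \ S).card with hk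
  have hkeq : (S \ Sstar).card = k := Finset.card_sdiff_comm (hS.trans hSstar.symm)
  have hkf : k ≤ f := by
    have hsub : Sstar \ S ⊆ Sᶜ := by
      intro i hi
      simp only [Finset.mem_compl]
      exact (Finset.mem_sdiff.mp hi).2
    have := Finset.card_le_card hsub
    rw [Finset.card_compl, hS] at this
    simp only [Fintype.card_fin] at this
    omega
  -- sum rearrangement
  have hsplit : (∑ i ∈ Sstar, x i) - (∑ i ∈ S, x i)
      = (∑ i ∈ Sstar \ S, x i) - (∑ i ∈ S \ Sstar, x i) := by
    have h1 := Finset.sum_inter_add_sum_sdiff Sstar S x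
    have h2 := Finset.sum_inter_add_sum_sdiff S Sstar x
    rw [← h1, ← h2, Finset.inter_comm]
    abel
  have hcancel : (∑ i ∈ Sstar \ S, x i) - (∑ i ∈ S \ Sstar, x i)
      = (∑ i ∈ Sstar \ S, (x i - x j0)) - (∑ i ∈ S \ Sstar, (x i - x j0)) := by
    simp [Finset.sum_sub_distrib, Finset.sum_const, hkeq, ← hk]
  -- norm bound on the difference of sums
  have hbound : ‖(∑ i ∈ Sstar, x i) - (∑ i ∈ S, x i)‖ ≤ 2 * (f : ℝ) * D := by
    rw [hsplit, hcancel]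
    have hA : ‖∑ i ∈ Sstar \ S, (x i - x j0)‖ ≤ (k : ℝ) * D := by
      calc ‖∑ i ∈ Sstar \ S, (x i - x j0)‖
          ≤ ∑ i ∈ Sstar \ S, ‖x i - x j0‖ := norm_sum_le _ _
        _ ≤ (Sstar \ S).card • D := by
            apply Finset.sum_le_card_nsmul
            intro i hi
            have hi' : i ∈ Sstar := (Finset.mem_sdiff.mp hi).1
            exact (le_diam x hi' hj0star).trans (hmin S hS)
        _ = (k : ℝ) * D := by rw [nsmul_eq_mul]
    have hB : ‖∑ i ∈ S \ Sstar, (x i - x j0)‖ ≤ (k : ℝ) * D := by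
      calc ‖∑ i ∈ S \ Sstar, (x i - x j0)‖
          ≤ ∑ i ∈ S \ Sstar, ‖x i - x j0‖ := norm_sum_le _ _
        _ ≤ (S \ Sstar).card • D := by
            apply Finset.sum_le_card_nsmul
            intro i hi
            have hi' : i ∈ S := (Finset.mem_sdiff.mp hi).1
            exact le_diam x hi' hj0S
        _ = (k : ℝ) * D := by rw [hkeq, nsmul_eq_mul]
    have hkfR : (k : ℝ) ≤ (f : ℝ) := by exact_mod_cast hkf
    calc ‖(∑ i ∈ Sstar \ S, (x i - x j0)) - (∑ i ∈ S \ Sstar, (x i - x j0))‖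
        ≤ ‖∑ i ∈ Sstar \ S, (x i - x j0)‖ + ‖∑ i ∈ S \ Sstar, (x i - x j0)‖ :=
          norm_sub_le _ _
      _ ≤ (k : ℝ) * D + (k : ℝ) * D := add_le_add hA hB
      _ ≤ (f : ℝ) * D + (f : ℝ) * D := by
          gcongr
      _ = 2 * (f : ℝ) * D := by ring
  -- finish
  rw [hS, hmr, ← smul_sub, norm_smul]
  rw [Real.norm_eq_abs, abs_of_pos (inv_pos.mpr hm_pos)]
  rw [div_eq_mul_inv, mul_comm (2 * (f : ℝ)) _, mul_assoc]
  exact mul_le_mul_of_nonneg_left hbound (inv_nonneg.mpr hm_pos.le)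
end

section
/- For any non-empty finite set S of vectors in ℝ^d, the Euclidean norm of the vector of coordinate-wise diameters is bounded by min{2√|S|, √d} times the diameter of S: √(Σ_{k=1}^d (max_{i,j∈S} |[xᵢ]_k − [xⱼ]_k|)²) ≤ min{2√|S|, √d} · max_{i,j∈S} ‖xᵢ − xⱼ‖. -/
/-- The Euclidean norm of the vector of coordinate-wise diameters is bounded by
`min (2√|S|) (√d)` times the diameter of the set. -/
theorem coordinatewise_diameter_bound {ι : Type*} [DecidableEq ι] (d : ℕ)
    (S : Finset ι) (hS : S.Nonempty) (x : ι → EuclideanSpace ℝ (Fin d)) :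
    Real.sqrt (∑ k : Fin d,
        ((((S ×ˢ S).sup fun p => ‖x p.1 k - x p.2 k‖₊) : NNReal) : ℝ) ^ 2)
      ≤ min (2 * Real.sqrt (S.card : ℝ)) (Real.sqrt (d : ℝ)) *
        ((((S ×ˢ S).sup fun p => ‖x p.1 - x p.2‖₊) : NNReal) : ℝ) := by
  classical
  obtain ⟨i0, hi0⟩ := hS
  set D : NNReal := (S ×ˢ S).sup fun p => ‖x p.1 - x p.2‖₊ with hD
  set c : Fin d → NNReal := (fun k => (S ×ˢ S).sup fun p => ‖x p.1 k - x p.2 k‖₊) with hc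
  have hnormsq : ∀ v : EuclideanSpace ℝ (Fin d), ‖v‖ ^ 2 = ∑ k, ‖v k‖ ^ 2 := by
    intro v
    rw [EuclideanSpace.norm_eq, Real.sq_sqrt (by positivity)]
  have hcoord : ∀ (v : EuclideanSpace ℝ (Fin d)) (k : Fin d), ‖v k‖ ≤ ‖v‖ := by
    intro v k
    have h1 : ‖v k‖ ^ 2 ≤ ‖v‖ ^ 2 := by
      rw [hnormsq]
      exact Finset.single_le_sum (f := fun i => ‖v i‖ ^ 2) (fun i _ => sq_nonneg _)
        (Finset.mem_univ k)
    calc ‖v k‖ = Real.sqrt (‖v k‖ ^ 2) := (Real.sqrt_sq (norm_nonneg _)).symm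
      _ ≤ Real.sqrt (‖v‖ ^ 2) := Real.sqrt_le_sqrt h1
      _ = ‖v‖ := Real.sqrt_sq (norm_nonneg _)
  -- c k ≤ D
  have hcD : ∀ k, c k ≤ D := by
    intro k
    rw [hc, hD]
    refine Finset.sup_le fun p hp => ?_
    have h1 : ‖x p.1 - x p.2‖₊ ≤ (S ×ˢ S).sup fun p => ‖x p.1 - x p.2‖₊ := by
      apply Finset.le_sup hp
    refine le_trans ?_ h1
    have h2 := hcoord (x p.1 - x p.2) k
    rw [show (x p.1 - x p.2) k = x p.1 k - x p.2 k from by simp] at h2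
    exact_mod_cast h2
  -- reference distances
  set m : Fin d → NNReal := (fun k => S.sup fun i => ‖x i k - x i0 k‖₊) with hm
  have hcm : ∀ k, c k ≤ 2 * m k := by
    intro k
    rw [hc]
    refine Finset.sup_le fun p hp => ?_
    obtain ⟨h1, h2⟩ := Finset.mem_product.mp hp
    have e1 : ‖x p.1 k - x i0 k‖₊ ≤ m k := by
      rw [hm]; exact Finset.le_sup (f := fun i => ‖x i k - x i0 k‖₊) h1
    have e2 : ‖x p.2 k - x i0 k‖₊ ≤ m k := by
      rw [hm]; exact Finset.le_sup (f := fun i => ‖x i k - x i0 k‖₊) h2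
    calc ‖x p.1 k - x p.2 k‖₊ ≤ ‖x p.1 k - x i0 k‖₊ + ‖x i0 k - x p.2 k‖₊ := by
          simpa using nnnorm_add_le (x p.1 k - x i0 k) (x i0 k - x p.2 k)
      _ ≤ m k + m k := add_le_add e1 (by rwa [← neg_sub, nnnorm_neg])
      _ = 2 * m k := (two_mul _).symm
  have hmsum : ∀ k, ((m k : ℝ)) ^ 2 ≤ ∑ i ∈ S, ‖x i k - x i0 k‖ ^ 2 := by
    intro k
    obtain ⟨i, hiS, hie⟩ := Finset.exists_mem_eq_sup S ⟨i0, hi0⟩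
      (fun i => ‖x i k - x i0 k‖₊)
    have he : (m k : ℝ) = ‖x i k - x i0 k‖ := by rw [hm]; simp [hie]
    rw [he]
    exact Finset.single_le_sum (f := fun i => ‖x i k - x i0 k‖ ^ 2)
      (fun i _ => sq_nonneg _) hiS
  have hDnn : (0 : ℝ) ≤ (D : ℝ) := D.coe_nonneg
  have hij : ∀ i ∈ S, ∀ j ∈ S, ‖x i - x j‖ ≤ (D : ℝ) := by
    intro i hi j hj
    have hp : ((i, j) : ι × ι) ∈ S ×ˢ S := Finset.mem_product.mpr ⟨hi, hj⟩
    have key : ∀ p ∈ S ×ˢ S, ‖x p.1 - x p.2‖₊ ≤ D := by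
      intro p hp'
      rw [hD]; apply Finset.le_sup hp'
    have h2 := key _ hp
    dsimp only at h2
    exact_mod_cast h2
  -- bound 1 : sqrt d
  have hb1 : Real.sqrt (∑ k : Fin d, ((c k : ℝ)) ^ 2) ≤ Real.sqrt d * D := by
    have hsum : (∑ k : Fin d, ((c k : ℝ)) ^ 2) ≤ (d : ℝ) * (D : ℝ) ^ 2 := by
      calc (∑ k : Fin d, ((c k : ℝ)) ^ 2) ≤ ∑ _k : Fin d, (D : ℝ) ^ 2 :=
            Finset.sum_le_sum fun k _ => pow_le_pow_left₀ (c k).coe_nonneg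
              (by exact_mod_cast hcD k) 2
        _ = (d : ℝ) * (D : ℝ) ^ 2 := by simp [mul_comm]
    calc Real.sqrt (∑ k : Fin d, ((c k : ℝ)) ^ 2) ≤ Real.sqrt ((d : ℝ) * (D : ℝ) ^ 2) :=
          Real.sqrt_le_sqrt hsum
      _ = Real.sqrt d * D := by
          rw [Real.sqrt_mul (by positivity), Real.sqrt_sq hDnn]
  -- bound 2 : 2 sqrt card
  have hb2 : Real.sqrt (∑ k : Fin d, ((c k : ℝ)) ^ 2) ≤ 2 * Real.sqrt S.card * D := by
    have key : (∑ k : Fin d, ((c k : ℝ)) ^ 2) ≤ 4 * (S.card : ℝ) * (D : ℝ) ^ 2 := by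
      calc (∑ k : Fin d, ((c k : ℝ)) ^ 2)
          ≤ ∑ k : Fin d, 4 * ((m k : ℝ)) ^ 2 := by
            refine Finset.sum_le_sum fun k _ => ?_
            have h2 : (c k : ℝ) ≤ 2 * (m k : ℝ) := by exact_mod_cast hcm k
            calc ((c k : ℝ)) ^ 2 ≤ (2 * (m k : ℝ)) ^ 2 :=
                  pow_le_pow_left₀ (c k).coe_nonneg h2 2
              _ = 4 * ((m k : ℝ)) ^ 2 := by ring
        _ ≤ ∑ k : Fin d, 4 * ∑ i ∈ S, ‖x i k - x i0 k‖ ^ 2 :=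
            Finset.sum_le_sum fun k _ => by
              have := hmsum k; linarith
        _ = 4 * ∑ i ∈ S, ‖x i - x i0‖ ^ 2 := by
            rw [← Finset.mul_sum, Finset.sum_comm]
            congr 1
            refine Finset.sum_congr rfl fun i _ => ?_
            rw [hnormsq (x i - x i0)]
            exact Finset.sum_congr rfl fun k _ => by simp
        _ ≤ 4 * ∑ _i ∈ S, (D : ℝ) ^ 2 := by
            gcongr with i hi
            exact hij i hi i0 hi0
        _ = 4 * (S.card : ℝ) * (D : ℝ) ^ 2 := by
            rw [Finset.sum_const, nsmul_eq_mul]; ring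
    calc Real.sqrt (∑ k : Fin d, ((c k : ℝ)) ^ 2)
        ≤ Real.sqrt (4 * (S.card : ℝ) * (D : ℝ) ^ 2) := Real.sqrt_le_sqrt key
      _ = 2 * Real.sqrt S.card * D := by
          rw [Real.sqrt_mul (by positivity), Real.sqrt_sq hDnn,
            Real.sqrt_mul (by norm_num), show Real.sqrt 4 = 2 by
              rw [show (4:ℝ) = 2^2 by norm_num, Real.sqrt_sq (by norm_num)]]
  rw [min_mul_of_nonneg _ _ hDnn]
  exact le_min hb2 hb1
end

section
/- If f < n/2, then the Coordinate-Wise Trimmed Mean rule CWTM is an (f, λ)-resilient averaging rule with λ = (f/(n−f)) · min{2√(n−f), √d}. That is, for any x₁,…,xₙ ∈ ℝ^d and any S ⊆ {1,…,n} with |S| = n−f, ‖CWTM(x₁,…,xₙ) − x̄_S‖ ≤ (f/(n−f)) min{2√(n−f), √d} · max_{i,j∈S} ‖xᵢ − xⱼ‖. -/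
lemma sorted_get_le (L : List ℝ) (hL : L.Pairwise (· ≤ ·)) (c : ℝ) :
    ∀ (l : ℕ) (hl : l < L.length), l < L.countP (fun a => decide (a ≤ c)) →
      L.get ⟨l, hl⟩ ≤ c := by
  induction L with
  | nil => intro l hl; simp at hl
  | cons a L ih =>
    intro l hl hcount
    obtain ⟨ha, hL'⟩ := List.pairwise_cons.mp hL
    cases l with
    | zero =>
      by_contra hac
      push_neg at hac
      have h0 : (a :: L).countP (fun x => decide (x ≤ c)) = 0 := by
        apply List.countP_eq_zero.mpr
        intro b hb
        simp only [decide_eq_true_eq]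
        rcases List.mem_cons.mp hb with h | h
        · subst h; exact not_le.mpr hac
        · exact fun hbc => absurd ((ha b h).trans hbc) (not_le.mpr hac)
      omega
    | succ l' =>
      rw [List.countP_cons] at hcount
      have : l' < L.countP (fun a => decide (a ≤ c)) := by
        split at hcount <;> omega
      exact ih hL' l' (by simpa using hl) this

lemma le_sorted_get (L : List ℝ) (hL : L.Pairwise (· ≤ ·)) (c : ℝ) :
    ∀ (l : ℕ) (hl : l < L.length), L.countP (fun a => decide (a < c)) ≤ l →
      c ≤ L.get ⟨l, hl⟩ := by
  induction L with
  | nil => intro l hl; simp at hl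
  | cons a L ih =>
    intro l hl hcount
    obtain ⟨ha, hL'⟩ := List.pairwise_cons.mp hL
    rw [List.countP_cons] at hcount
    by_cases hac : a < c
    · simp only [hac, decide_true, if_true] at hcount
      cases l with
      | zero => omega
      | succ l' =>
        exact ih hL' l' (by simpa using hl) (by omega)
    · have hca : c ≤ a := not_lt.mp hac
      cases l with
      | zero => exact hca
      | succ l' =>
        exact hca.trans (ha _ (L.get_mem _))
open Finset

lemma avg_sub_avg (z : ℕ → ℝ) (B : ℝ) (m : ℕ) (T : Finset ℕ) (hT : T ⊆ Finset.range m)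
    (hB : ∀ i ∈ Finset.range m, ∀ j ∈ Finset.range m, z i - z j ≤ B)
    (hTc : 0 < T.card) :
    (T.card : ℝ)⁻¹ * ∑ l ∈ T, z l - (m : ℝ)⁻¹ * ∑ l ∈ Finset.range m, z l
      ≤ (((m - T.card : ℕ) : ℝ) / m) * B := by
  set r := T.card with hr
  have hrm : r ≤ m := by simpa using (Finset.card_le_card hT)
  have hm : 0 < m := lt_of_lt_of_le hTc hrm
  have hsplit : ∑ l ∈ Finset.range m \ T, z l + ∑ l ∈ T, z l = ∑ l ∈ Finset.range m, z l :=
    Finset.sum_sdiff hT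
  have hcard : (Finset.range m \ T).card = m - r := by
    rw [Finset.card_sdiff_of_subset hT, Finset.card_range]
  have expand : ((m - r : ℕ) : ℝ) * ∑ l ∈ T, z l - (r:ℝ) * ∑ l' ∈ Finset.range m \ T, z l'
      = ∑ l' ∈ Finset.range m \ T, ∑ l ∈ T, (z l - z l') := by
    have : ∀ l' , ∑ l ∈ T, (z l - z l') = (∑ l ∈ T, z l) - (r:ℝ) * z l' := by
      intro l'
      rw [Finset.sum_sub_distrib, Finset.sum_const, nsmul_eq_mul]
    simp only [this]
    rw [Finset.sum_sub_distrib, Finset.sum_const, nsmul_eq_mul, hcard, ← Finset.mul_sum]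
    try ring
  have hbound : ∑ l' ∈ Finset.range m \ T, ∑ l ∈ T, (z l - z l')
      ≤ ((m - r : ℕ) : ℝ) * r * B := by
    calc ∑ l' ∈ Finset.range m \ T, ∑ l ∈ T, (z l - z l')
        ≤ ∑ l' ∈ Finset.range m \ T, ∑ l ∈ T, B := by
          apply Finset.sum_le_sum
          intro l' hl'
          apply Finset.sum_le_sum
          intro l hl
          exact hB l (hT hl) l' (Finset.mem_sdiff.mp hl').1
      _ = ((m - r : ℕ) : ℝ) * r * B := by
          simp [Finset.sum_const, hcard, nsmul_eq_mul]; ring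
  have key : (m : ℝ) * ∑ l ∈ T, z l - (r : ℝ) * ∑ l ∈ Finset.range m, z l
      ≤ ((m - r : ℕ) : ℝ) * r * B := by
    rw [← hsplit]
    have hmr : (m:ℝ) = ((m - r : ℕ) : ℝ) + r := by
      push_cast [Nat.cast_sub hrm]; ring
    calc (m : ℝ) * ∑ l ∈ T, z l - (r : ℝ) * (∑ l ∈ Finset.range m \ T, z l + ∑ l ∈ T, z l)
        = ((m - r : ℕ) : ℝ) * ∑ l ∈ T, z l - (r:ℝ) * ∑ l' ∈ Finset.range m \ T, z l' := by
          rw [hmr]; ring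
      _ ≤ _ := by rw [expand]; exact hbound
  have hr0 : (0:ℝ) < r := by exact_mod_cast hTc
  have hm0 : (0:ℝ) < m := by exact_mod_cast hm
  have heq : (r : ℝ)⁻¹ * ∑ l ∈ T, z l - (m : ℝ)⁻¹ * ∑ l ∈ Finset.range m, z l
      = ((m : ℝ) * ∑ l ∈ T, z l - (r : ℝ) * ∑ l ∈ Finset.range m, z l) / (r * m) := by
    field_simp
  rw [heq, div_le_iff₀ (by positivity)]
  calc (m : ℝ) * ∑ l ∈ T, z l - (r : ℝ) * ∑ l ∈ Finset.range m, z l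
      ≤ ((m - r : ℕ) : ℝ) * r * B := key
    _ = ((m - r : ℕ) : ℝ) / m * B * (r * m) := by field_simp
open Finset

lemma coord_bound (n f : ℕ) (hfn : 2 * f < n) (σ : Equiv.Perm (Fin n)) (y : Fin n → ℝ)
    (hmono : ∀ i j : Fin n, i ≤ j → y (σ i) ≤ y (σ j))
    (S : Finset (Fin n)) (hS : S.card = n - f) (B : ℝ)
    (hB : ∀ i ∈ S, ∀ j ∈ S, y i - y j ≤ B) :
    |((n : ℝ) - 2 * f)⁻¹ *
        (∑ j ∈ Finset.univ.filter (fun j : Fin n => f ≤ j.val ∧ j.val < n - f), y (σ j))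
      - (S.card : ℝ)⁻¹ * ∑ i ∈ S, y i| ≤ (f : ℝ) / ((n : ℝ) - f) * B := by
  set m := n - f with hm
  set r := n - 2 * f with hr
  have hrm : r ≤ m := by omega
  have hr0 : 0 < r := by omega
  have hm0 : 0 < m := by omega
  -- sorted list of values over S
  set L := Multiset.sort (S.val.map y) (· ≤ ·) with hL
  have hLcoe : (↑L : Multiset ℝ) = S.val.map y := Multiset.sort_eq _ _
  have hlen : L.length = m := by
    rw [hL, Multiset.length_sort, Multiset.card_map]
    exact hS
  have hsorted : L.Pairwise (· ≤ ·) := Multiset.pairwise_sort _ _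
  set zn : ℕ → ℝ := fun l => if h : l < L.length then L.get ⟨l, h⟩ else 0 with hzn
  have hsum : ∑ l ∈ Finset.range m, zn l = ∑ i ∈ S, y i := by
    have h1 : (↑L : Multiset ℝ).sum = ∑ i ∈ S, y i := by rw [hLcoe]; rfl
    have h2 : L.sum = ∑ l ∈ Finset.range L.length, zn l := by
      conv_lhs => rw [← List.ofFn_get L]
      rw [List.sum_ofFn]
      rw [← Fin.sum_univ_eq_sum_range]
      apply Finset.sum_congr rfl
      intro i _
      simp [hzn, i.isLt]
    rw [← h1]
    rw [show (↑L : Multiset ℝ).sum = L.sum from rfl, h2, hlen]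
  have hmemS : ∀ l, l < m → ∃ i ∈ S, zn l = y i := by
    intro l hl
    have hl' : l < L.length := by omega
    have : L.get ⟨l, hl'⟩ ∈ L := L.get_mem _
    have : L.get ⟨l, hl'⟩ ∈ (↑L : Multiset ℝ) := by simpa using this
    rw [hLcoe, Multiset.mem_map] at this
    obtain ⟨i, hiS, hieq⟩ := this
    refine ⟨i, hiS, ?_⟩
    simp only [hzn, dif_pos hl']
    exact hieq.symm
  have hcount : ∀ (p : ℝ → Prop) [DecidablePred p],
      L.countP (fun a => decide (p a)) = (S.filter (fun i => p (y i))).card := by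
    intro p hp
    have h1 := Multiset.coe_countP p L
    rw [hLcoe, Multiset.countP_map] at h1
    rw [← h1]
    rfl
  -- values in trimmed positions, as a function on ℕ
  set w : ℕ → ℝ := fun l => if h : f + l < n then y (σ ⟨f + l, h⟩) else 0 with hw
  -- lower order-statistic bound
  have F3 : ∀ l, l < r → zn l ≤ w l := by
    intro l hl
    have hfl : f + l < n := by omega
    have hfl1 : f + l + 1 ≤ n := by omega
    set c0 := y (σ ⟨f + l, hfl⟩) with hc0
    have hwl : w l = c0 := by simp [hw, hfl, hc0]
    set J := (Finset.univ : Finset (Fin (f + l + 1))).image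
      (fun j => σ (Fin.castLE hfl1 j)) with hJ
    have hJcard : J.card = f + l + 1 := by
      have hinj : Function.Injective (fun j : Fin (f + l + 1) => σ (Fin.castLE hfl1 j)) :=
        fun a b hab => Fin.castLE_injective hfl1 (σ.injective hab)
      rw [hJ, Finset.card_image_of_injective _ hinj]
      simp
    have hun := Finset.card_union_add_card_inter J S
    have hun2 : (J ∪ S).card ≤ n := le_trans (Finset.card_le_univ _) (by simp)
    have hJS : l + 1 ≤ (J ∩ S).card := by omega
    have hsub : J ∩ S ⊆ S.filter (fun i => y i ≤ c0) := by
      intro i hi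
      obtain ⟨hiJ, hiS⟩ := Finset.mem_inter.mp hi
      obtain ⟨j, _, hj⟩ := Finset.mem_image.mp hiJ
      rw [Finset.mem_filter]
      refine ⟨hiS, ?_⟩
      rw [← hj]
      apply hmono
      rw [Fin.le_def]
      simpa using Nat.lt_succ_iff.mp j.isLt
    have hfc : l + 1 ≤ (S.filter (fun i => y i ≤ c0)).card :=
      le_trans hJS (Finset.card_le_card hsub)
    have hlm : l < L.length := by omega
    have := sorted_get_le L hsorted c0 l hlm (by rw [hcount]; omega)
    rw [hwl]
    simpa [hzn, hlm] using this
  -- upper order-statistic bound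
  have F4 : ∀ l, l < r → w l ≤ zn (f + l) := by
    intro l hl
    have hfl : f + l < n := by omega
    set c0 := y (σ ⟨f + l, hfl⟩) with hc0
    have hwl : w l = c0 := by simp [hw, hfl, hc0]
    set q := n - (f + l) with hq
    set K := (Finset.univ : Finset (Fin q)).image
      (fun j => σ ⟨f + l + j.val, by omega⟩) with hK
    have hKinj : Function.Injective (fun j : Fin q => σ ⟨f + l + j.val, by omega⟩) := by
      intro a b hab
      have h1 := σ.injective hab
      have h2 : f + l + a.val = f + l + b.val := congrArg Fin.val h1
      exact Fin.ext (by omega)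
    have hKcard : K.card = q := by
      rw [hK, Finset.card_image_of_injective _ hKinj]; simp
    have hun := Finset.card_union_add_card_inter K S
    have hun2 : (K ∪ S).card ≤ n := le_trans (Finset.card_le_univ _) (by simp)
    have hKS : m - f - l ≤ (K ∩ S).card := by omega
    have hsub : K ∩ S ⊆ S.filter (fun i => c0 ≤ y i) := by
      intro i hi
      obtain ⟨hiK, hiS⟩ := Finset.mem_inter.mp hi
      obtain ⟨j, _, hj⟩ := Finset.mem_image.mp hiK
      rw [Finset.mem_filter]
      refine ⟨hiS, ?_⟩
      rw [← hj]
      apply hmono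
      rw [Fin.le_def]
      simp
    have hfc : m - f - l ≤ (S.filter (fun i => c0 ≤ y i)).card :=
      le_trans hKS (Finset.card_le_card hsub)
    have hpartition := Finset.card_filter_add_card_filter_not
      (s := S) (fun i => c0 ≤ y i)
    have hlt : (S.filter (fun i => y i < c0)).card ≤ f + l := by
      have : (S.filter (fun i => ¬ c0 ≤ y i)) = S.filter (fun i => y i < c0) := by
        apply Finset.filter_congr
        intro i _
        simp [not_le]
      rw [this] at hpartition
      omega
    have hflm : f + l < L.length := by omega
    have := le_sorted_get L hsorted c0 (f + l) hflm (by rw [hcount]; omega)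
    rw [hwl]
    simpa [hzn, hflm] using this
  -- rewriting the trimmed sum
  have hTsum : ∑ j ∈ Finset.univ.filter (fun j : Fin n => f ≤ j.val ∧ j.val < n - f), y (σ j)
      = ∑ l ∈ Finset.range r, w l := by
    refine Finset.sum_bij' (i := fun j _ => j.val - f)
      (j := fun l hl => (⟨f + l, by
        have := Finset.mem_range.mp hl; omega⟩ : Fin n)) ?_ ?_ ?_ ?_ ?_
    · intro a ha
      have := (Finset.mem_filter.mp ha).2
      simp only [Finset.mem_range]
      omega
    · intro l hl
      have := Finset.mem_range.mp hl
      rw [Finset.mem_filter]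
      refine ⟨Finset.mem_univ _, ?_⟩
      simp
      omega
    · intro a ha
      have := (Finset.mem_filter.mp ha).2
      apply Fin.ext
      simp
      omega
    · intro l hl
      have := Finset.mem_range.mp hl
      simp
    · intro a ha
      have h2 := (Finset.mem_filter.mp ha).2
      have hlt : f + (a.val - f) < n := by omega
      simp only [hw]
      rw [dif_pos hlt]
      congr 2
      apply Fin.ext
      simp
      omega
  -- bound functions for zn
  have hBzn : ∀ i ∈ Finset.range m, ∀ j ∈ Finset.range m, zn i - zn j ≤ B := by
    intro i hi j hj
    obtain ⟨a, haS, ha⟩ := hmemS i (Finset.mem_range.mp hi)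
    obtain ⟨b, hbS, hb⟩ := hmemS j (Finset.mem_range.mp hj)
    rw [ha, hb]
    exact hB a haS b hbS
  -- casts
  have hcast1 : ((n : ℝ) - 2 * f) = ((r : ℕ) : ℝ) := by
    rw [hr]; push_cast [Nat.cast_sub (by omega : 2 * f ≤ n)]; ring
  have hcast2 : ((n : ℝ) - f) = ((m : ℕ) : ℝ) := by
    rw [hm]; push_cast [Nat.cast_sub (by omega : f ≤ n)]; ring
  rw [hTsum, hcast1, hcast2, hS]
  rw [← hsum]
  rw [abs_sub_le_iff]
  constructor
  · -- upper direction
    have h1 : ∑ l ∈ Finset.range r, w l ≤ ∑ l ∈ Finset.Ico f m, zn l := by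
      rw [Finset.sum_Ico_eq_sum_range, show m - f = r from by omega]
      apply Finset.sum_le_sum
      intro l hl
      exact F4 l (Finset.mem_range.mp hl)
    have h2 := avg_sub_avg zn B m (Finset.Ico f m)
      (by intro a ha; rw [Finset.mem_range]; exact (Finset.mem_Ico.mp ha).2)
      hBzn (by rw [Nat.card_Ico]; omega)
    rw [Nat.card_Ico] at h2
    have hmf : m - f = r := by omega
    rw [hmf, show m - r = f from by omega] at h2
    calc ((r:ℕ):ℝ)⁻¹ * ∑ l ∈ Finset.range r, w l - ((m:ℕ):ℝ)⁻¹ * ∑ l ∈ Finset.range m, zn l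
        ≤ ((r:ℕ):ℝ)⁻¹ * ∑ l ∈ Finset.Ico f m, zn l - ((m:ℕ):ℝ)⁻¹ * ∑ l ∈ Finset.range m, zn l := by
          apply sub_le_sub_right
          apply mul_le_mul_of_nonneg_left h1 (by positivity)
      _ ≤ (f : ℝ) / ((m:ℕ):ℝ) * B := h2
  · -- lower direction
    have h1 : ∑ l ∈ Finset.range r, zn l ≤ ∑ l ∈ Finset.range r, w l := by
      apply Finset.sum_le_sum
      intro l hl
      exact F3 l (Finset.mem_range.mp hl)
    have h2 := avg_sub_avg (fun l => -zn l) B m (Finset.range r)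
      (by intro a ha; rw [Finset.mem_range] at *; omega)
      (by intro i hi j hj; show -zn i - -zn j ≤ B; linarith [hBzn j hj i hi])
      (by rw [Finset.card_range]; omega)
    rw [Finset.card_range] at h2
    have hmr : m - r = f := by omega
    rw [hmr] at h2
    simp only [Finset.sum_neg_distrib, mul_neg, neg_sub_neg] at h2
    calc ((m:ℕ):ℝ)⁻¹ * ∑ l ∈ Finset.range m, zn l - ((r:ℕ):ℝ)⁻¹ * ∑ l ∈ Finset.range r, w l
        ≤ ((m:ℕ):ℝ)⁻¹ * ∑ l ∈ Finset.range m, zn l - ((r:ℕ):ℝ)⁻¹ * ∑ l ∈ Finset.range r, zn l := by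
          apply sub_le_sub_left
          apply mul_le_mul_of_nonneg_left h1 (by positivity)
      _ ≤ (f : ℝ) / ((m:ℕ):ℝ) * B := h2

/-- CWTM is `(f, (f/(n-f))·min{2√(n-f), √d})`-resilient averaging when `f < n/2`. -/
theorem cwtm_resilient (n f d : ℕ) (hfn : 2 * f < n)
    (x : Fin n → EuclideanSpace ℝ (Fin d))
    (τ : Fin d → Equiv.Perm (Fin n))
    (hτ : ∀ k : Fin d, ∀ i j : Fin n, i ≤ j → x (τ k i) k ≤ x (τ k j) k)
    (c : EuclideanSpace ℝ (Fin d))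
    (hc : ∀ k : Fin d, c k = ((n : ℝ) - 2 * f)⁻¹ *
      ∑ j ∈ Finset.univ.filter (fun j : Fin n => f ≤ j.val ∧ j.val < n - f), x (τ k j) k)
    (S : Finset (Fin n)) (hS : S.card = n - f) :
    ‖c - (S.card : ℝ)⁻¹ • ∑ i ∈ S, x i‖ ≤
      ((f : ℝ) / ((n : ℝ) - f)) * min (2 * Real.sqrt ((n : ℝ) - f)) (Real.sqrt (d : ℝ)) *
        diam x S := by
  have hfn' : f ≤ n := by omega
  have hSc : 0 < S.card := by rw [hS]; omega
  have hSne : S.Nonempty := Finset.card_pos.mp hSc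
  have hi0 := hSne.choose_spec
  set i0 := hSne.choose with hi0def
  have hD0' : 0 ≤ diam x S := by unfold diam; exact NNReal.coe_nonneg _
  have hDle' : ∀ i ∈ S, ∀ j ∈ S, ‖x i - x j‖ ≤ diam x S := by
    intro i hi j hj
    have hmem : (i, j) ∈ S ×ˢ S := Finset.mem_product.mpr ⟨hi, hj⟩
    have h1 := Finset.le_sup (f := fun p : Fin n × Fin n => ‖x p.1 - x p.2‖₊) hmem
    rw [diam, ← coe_nnnorm]
    exact_mod_cast h1
  set D := diam x S with hDdef
  have hD0 : 0 ≤ D := hD0'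
  have hDle : ∀ i ∈ S, ∀ j ∈ S, ‖x i - x j‖ ≤ D := hDle'
  have hMpos : (0:ℝ) < (n:ℝ) - f := by
    have : (f:ℝ) < n := by exact_mod_cast (by omega : f < n)
    linarith
  set ratio := (f:ℝ)/((n:ℝ)-f) with hratio
  have hratio0 : 0 ≤ ratio := div_nonneg (Nat.cast_nonneg f) hMpos.le
  have hcard : ((S.card : ℕ):ℝ) = (n:ℝ) - f := by
    rw [hS]; push_cast [Nat.cast_sub hfn']; ring
  have he : ∀ k : Fin d, (c - (S.card:ℝ)⁻¹ • ∑ i ∈ S, x i) k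
      = c k - (S.card:ℝ)⁻¹ * ∑ i ∈ S, x i k := by
    intro k
    rw [PiLp.sub_apply, PiLp.smul_apply, WithLp.ofLp_sum, Finset.sum_apply]
    rfl
  have hsubap : ∀ (i j : Fin n) (k : Fin d), (x i - x j) k = x i k - x j k := by
    intro i j k; rw [PiLp.sub_apply]
  have hcoordv : ∀ (v : EuclideanSpace ℝ (Fin d)) (k : Fin d), |v k| ≤ ‖v‖ := by
    intro v k
    rw [EuclideanSpace.norm_eq]
    rw [show |v k| = Real.sqrt (‖v k‖^2) by rw [Real.sqrt_sq_eq_abs]; simp [Real.norm_eq_abs]]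
    apply Real.sqrt_le_sqrt
    exact Finset.single_le_sum (f := fun i => ‖v i‖^2) (fun i _ => sq_nonneg _) (Finset.mem_univ k)
  have hnormsq : ∀ (v : EuclideanSpace ℝ (Fin d)), ‖v‖^2 = ∑ k, (v k)^2 := by
    intro v
    rw [EuclideanSpace.norm_eq, Real.sq_sqrt (by positivity)]
    simp [Real.norm_eq_abs, sq_abs]
  have hcoordD : ∀ k : Fin d, ∀ i ∈ S, ∀ j ∈ S, |x i k - x j k| ≤ D := by
    intro k i hi j hj
    rw [← hsubap]
    exact (hcoordv _ k).trans (hDle i hi j hj)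
  have hkey : ∀ (k : Fin d) (B : ℝ), (∀ i ∈ S, ∀ j ∈ S, |x i k - x j k| ≤ B) →
      |c k - (S.card:ℝ)⁻¹ * ∑ i ∈ S, x i k| ≤ ratio * B := by
    intro k B hBk
    rw [hc k, hratio]
    exact coord_bound n f hfn (τ k) (fun i => x i k) (hτ k) S hS B
      (fun i hi j hj => le_trans (le_abs_self _) (hBk i hi j hj))
  set g : Fin d → ℝ := fun k => 2 * S.sup' hSne (fun i => |x i k - x i0 k|) with hgdef
  have hgk : ∀ k : Fin d, ∀ i ∈ S, ∀ j ∈ S, |x i k - x j k| ≤ g k := by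
    intro k i hi j hj
    have h1 : |x i k - x i0 k| ≤ S.sup' hSne (fun i => |x i k - x i0 k|) :=
      Finset.le_sup' (f := fun i => |x i k - x i0 k|) hi
    have h2 : |x j k - x i0 k| ≤ S.sup' hSne (fun i => |x i k - x i0 k|) :=
      Finset.le_sup' (f := fun i => |x i k - x i0 k|) hj
    have h3 : |x i k - x j k| ≤ |x i k - x i0 k| + |x j k - x i0 k| := by
      rw [show x i k - x j k = (x i k - x i0 k) - (x j k - x i0 k) by ring]
      exact abs_sub _ _
    have hg : g k = 2 * S.sup' hSne (fun i => |x i k - x i0 k|) := rfl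
    rw [hg]
    linarith
  have hg2 : ∑ k, (g k)^2 ≤ 4 * ((n:ℝ) - f) * D^2 := by
    have hterm : ∀ k : Fin d, (g k)^2 ≤ 4 * ∑ i ∈ S, (x i k - x i0 k)^2 := by
      intro k
      obtain ⟨i1, hi1, hsup⟩ := Finset.exists_mem_eq_sup' hSne (fun i => |x i k - x i0 k|)
      have hgeq : (g k)^2 = 4 * (x i1 k - x i0 k)^2 := by
        have hg : g k = 2 * S.sup' hSne (fun i => |x i k - x i0 k|) := rfl
        rw [hg, hsup, mul_pow, sq_abs]
        norm_num
      rw [hgeq]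
      have h4 : (x i1 k - x i0 k)^2 ≤ ∑ i ∈ S, (x i k - x i0 k)^2 :=
        Finset.single_le_sum (f := fun i => (x i k - x i0 k)^2)
          (fun i _ => sq_nonneg _) hi1
      linarith
    calc ∑ k, (g k)^2 ≤ ∑ k : Fin d, 4 * ∑ i ∈ S, (x i k - x i0 k)^2 :=
          Finset.sum_le_sum (fun k _ => hterm k)
      _ = 4 * ∑ i ∈ S, ∑ k, (x i k - x i0 k)^2 := by
          rw [← Finset.mul_sum, Finset.sum_comm]
      _ = 4 * ∑ i ∈ S, ‖x i - x i0‖^2 := by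
          congr 1
          apply Finset.sum_congr rfl
          intro i _
          rw [hnormsq (x i - x i0)]
          apply Finset.sum_congr rfl
          intro k _
          rw [hsubap]
      _ ≤ 4 * ∑ i ∈ S, D^2 := by
          have : ∑ i ∈ S, ‖x i - x i0‖^2 ≤ ∑ i ∈ S, D^2 := by
            apply Finset.sum_le_sum
            intro i hi
            exact pow_le_pow_left₀ (norm_nonneg _) (hDle i hi i0 hi0) 2
          linarith
      _ = 4 * ((n:ℝ) - f) * D^2 := by
          rw [Finset.sum_const, nsmul_eq_mul, hcard]
          ring
  set e := c - (S.card:ℝ)⁻¹ • ∑ i ∈ S, x i with hedef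
  have hek : ∀ (k : Fin d) (B : ℝ), (∀ i ∈ S, ∀ j ∈ S, |x i k - x j k| ≤ B) →
      |e k| ≤ ratio * B := by
    intro k B hBk
    rw [he k]
    exact hkey k B hBk
  have hsum1 : ∑ k, (e k)^2 ≤ (d:ℝ) * (ratio * D)^2 := by
    calc ∑ k, (e k)^2 ≤ ∑ _k : Fin d, (ratio * D)^2 := by
          apply Finset.sum_le_sum
          intro k _
          rw [← sq_abs (e k)]
          exact pow_le_pow_left₀ (abs_nonneg _) (hek k D (hcoordD k)) 2
      _ = (d:ℝ) * (ratio * D)^2 := by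
          rw [Finset.sum_const, nsmul_eq_mul]
          simp
  have hsum2 : ∑ k, (e k)^2 ≤ ratio^2 * (4 * ((n:ℝ) - f) * D^2) := by
    calc ∑ k, (e k)^2 ≤ ∑ k : Fin d, ratio^2 * (g k)^2 := by
          apply Finset.sum_le_sum
          intro k _
          rw [← sq_abs (e k), show ratio^2 * (g k)^2 = (ratio * g k)^2 by ring]
          have hgk0 : 0 ≤ g k := le_trans (abs_nonneg _) (hgk k i0 hi0 i0 hi0)
          exact pow_le_pow_left₀ (abs_nonneg _) (hek k (g k) (hgk k)) 2
      _ = ratio^2 * ∑ k, (g k)^2 := by rw [Finset.mul_sum]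
      _ ≤ ratio^2 * (4 * ((n:ℝ) - f) * D^2) :=
          mul_le_mul_of_nonneg_left hg2 (sq_nonneg _)
  have hnn : 0 ≤ ‖e‖ := norm_nonneg _
  have hne : ‖e‖^2 = ∑ k, (e k)^2 := hnormsq e
  rcases le_total (2 * Real.sqrt ((n:ℝ) - f)) (Real.sqrt (d:ℝ)) with hmin | hmin
  · rw [min_eq_left hmin]
    have hR0 : 0 ≤ ratio * (2 * Real.sqrt ((n:ℝ) - f)) * D := by positivity
    have hsq : ‖e‖^2 ≤ (ratio * (2 * Real.sqrt ((n:ℝ) - f)) * D)^2 := by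
      rw [hne]
      calc ∑ k, (e k)^2 ≤ ratio^2 * (4 * ((n:ℝ) - f) * D^2) := hsum2
        _ = (ratio * (2 * Real.sqrt ((n:ℝ) - f)) * D)^2 := by
            have hs : Real.sqrt ((n:ℝ) - f) ^ 2 = (n:ℝ) - f := Real.sq_sqrt hMpos.le
            linear_combination (-(4:ℝ) * ratio^2 * D^2) * hs
    have := Real.sqrt_le_sqrt hsq
    rwa [Real.sqrt_sq hnn, Real.sqrt_sq hR0] at this
  · rw [min_eq_right hmin]
    have hR0 : 0 ≤ ratio * Real.sqrt (d:ℝ) * D := by positivity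
    have hsq : ‖e‖^2 ≤ (ratio * Real.sqrt (d:ℝ) * D)^2 := by
      rw [hne]
      calc ∑ k, (e k)^2 ≤ (d:ℝ) * (ratio * D)^2 := hsum1
        _ = (ratio * Real.sqrt (d:ℝ) * D)^2 := by
            have hs : Real.sqrt (d:ℝ) ^ 2 = (d:ℝ) := Real.sq_sqrt (Nat.cast_nonneg d)
            linear_combination (-(ratio^2) * D^2) * hs
    have := Real.sqrt_le_sqrt hsq
    rwa [Real.sqrt_sq hnn, Real.sqrt_sq hR0] at this
end

section
/- If f < n/2, then the Mean-around-Median rule MeaMed is an (f, λ)-resilient averaging rule with λ = (2f/(n−f)) · min{2√(n−f), √d}. -/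
open scoped Classical

/-- `m` is a median of `y₁, …, yₙ`. -/
noncomputable def IsMedian {n : ℕ} (y : Fin n → ℝ) (m : ℝ) : Prop :=
  (n : ℝ) / 2 ≤ ((Finset.univ.filter fun i => y i ≤ m).card : ℝ) ∧
  (n : ℝ) / 2 ≤ ((Finset.univ.filter fun i => m ≤ y i).card : ℝ)

lemma coord_bound_s4 (n f : ℕ) (hfn : 2 * f < n) (y : Fin n → ℝ) (m : ℝ)
    (hmed1 : (n : ℝ) / 2 ≤ ((Finset.univ.filter fun i => y i ≤ m).card : ℝ))
    (hmed2 : (n : ℝ) / 2 ≤ ((Finset.univ.filter fun i => m ≤ y i).card : ℝ))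
    (T : Finset (Fin n)) (hT : T.card = n - f)
    (hclose : ∀ i ∈ T, ∀ j, j ∉ T → |y i - m| ≤ |y j - m|)
    (S : Finset (Fin n)) (hS : S.card = n - f) (dk : ℝ)
    (hdk : ∀ i ∈ S, ∀ j ∈ S, |y i - y j| ≤ dk) :
    |(∑ i ∈ T, y i) - ∑ i ∈ S, y i| ≤ 2 * f * dk := by
  have hfn' : f < n := by omega
  -- there is a ∈ S with y a ≤ m
  have ha : ∃ a ∈ S, y a ≤ m := by
    by_contra hcon
    push_neg at hcon
    have hsub : (Finset.univ.filter fun i => y i ≤ m) ⊆ Finset.univ \ S := by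
      intro a haA
      rw [Finset.mem_filter] at haA
      rw [Finset.mem_sdiff]
      exact ⟨Finset.mem_univ a, fun haS => absurd haA.2 (not_le.mpr (hcon a haS))⟩
    have hcard : (Finset.univ.filter fun i => y i ≤ m).card ≤ f := by
      have := Finset.card_le_card hsub
      rwa [Finset.card_sdiff_of_subset (Finset.subset_univ S), Finset.card_univ,
        Fintype.card_fin, hS, Nat.sub_sub_self (by omega)] at this
    have : ((Finset.univ.filter fun i => y i ≤ m).card : ℝ) ≤ f := by exact_mod_cast hcard
    have hn : (2 * f : ℝ) < n := by exact_mod_cast hfn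
    linarith
  have hb : ∃ b ∈ S, m ≤ y b := by
    by_contra hcon
    push_neg at hcon
    have hsub : (Finset.univ.filter fun i => m ≤ y i) ⊆ Finset.univ \ S := by
      intro a haA
      rw [Finset.mem_filter] at haA
      rw [Finset.mem_sdiff]
      exact ⟨Finset.mem_univ a, fun haS => absurd haA.2 (not_le.mpr (hcon a haS))⟩
    have hcard : (Finset.univ.filter fun i => m ≤ y i).card ≤ f := by
      have := Finset.card_le_card hsub
      rwa [Finset.card_sdiff_of_subset (Finset.subset_univ S), Finset.card_univ,
        Fintype.card_fin, hS, Nat.sub_sub_self (by omega)] at this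
    have : ((Finset.univ.filter fun i => m ≤ y i).card : ℝ) ≤ f := by exact_mod_cast hcard
    have hn : (2 * f : ℝ) < n := by exact_mod_cast hfn
    linarith
  obtain ⟨a, haS, ham⟩ := ha
  obtain ⟨b, hbS, hbm⟩ := hb
  -- every j ∈ S is within dk of m
  have hm : ∀ j ∈ S, |y j - m| ≤ dk := by
    intro j hjS
    rcases le_total (y j) m with h | h
    · have h1 : |y j - m| = m - y j := by rw [abs_sub_comm, abs_of_nonneg (by linarith)]
      have h2 : m - y j ≤ y b - y j := by linarith
      have h3 : y b - y j ≤ |y b - y j| := le_abs_self _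
      have h4 := hdk b hbS j hjS
      linarith
    · have h1 : |y j - m| = y j - m := abs_of_nonneg (by linarith)
      have h2 : y j - m ≤ y j - y a := by linarith
      have h3 : y j - y a ≤ |y j - y a| := le_abs_self _
      have h4 := hdk j hjS a haS
      linarith
  have hcards : (T \ S).card = (S \ T).card := Finset.card_sdiff_comm (hT.trans hS.symm)
  have key : (∑ i ∈ T, y i) - ∑ i ∈ S, y i
      = (∑ i ∈ T \ S, (y i - m)) - ∑ i ∈ S \ T, (y i - m) := by
    have e1 : ∑ i ∈ T ∩ S, y i + ∑ i ∈ T \ S, y i = ∑ i ∈ T, y i :=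
      Finset.sum_inter_add_sum_sdiff T S y
    have e2 : ∑ i ∈ S ∩ T, y i + ∑ i ∈ S \ T, y i = ∑ i ∈ S, y i :=
      Finset.sum_inter_add_sum_sdiff S T y
    have e3 : S ∩ T = T ∩ S := Finset.inter_comm S T
    rw [e3] at e2
    have e4 : ∑ i ∈ T \ S, (y i - m) = (∑ i ∈ T \ S, y i) - (T \ S).card * m := by
      rw [Finset.sum_sub_distrib, Finset.sum_const, nsmul_eq_mul]
    have e5 : ∑ i ∈ S \ T, (y i - m) = (∑ i ∈ S \ T, y i) - (S \ T).card * m := by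
      rw [Finset.sum_sub_distrib, Finset.sum_const, nsmul_eq_mul]
    rw [e4, e5, hcards]
    linarith
  have htf : (S \ T).card ≤ f := by
    have hsub : S \ T ⊆ Finset.univ \ T :=
      Finset.sdiff_subset_sdiff (Finset.subset_univ S) Finset.Subset.rfl
    have := Finset.card_le_card hsub
    rwa [Finset.card_sdiff_of_subset (Finset.subset_univ T), Finset.card_univ, Fintype.card_fin, hT,
      Nat.sub_sub_self (by omega)] at this
  have hdk0 : 0 ≤ dk := le_trans (abs_nonneg _) (hdk a haS a haS)
  rcases Finset.eq_empty_or_nonempty (S \ T) with hemp | ⟨j0, hj0⟩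
  · have h1 : (T \ S) = ∅ := Finset.card_eq_zero.mp (by rw [hcards, hemp]; simp)
    rw [key, hemp, h1]
    simp
    positivity
  · have hj0S : j0 ∈ S := (Finset.mem_sdiff.mp hj0).1
    have hj0T : j0 ∉ T := (Finset.mem_sdiff.mp hj0).2
    have hTb : ∀ i ∈ T \ S, |y i - m| ≤ dk := fun i hi =>
      le_trans (hclose i (Finset.mem_sdiff.mp hi).1 j0 hj0T) (hm j0 hj0S)
    have hSb : ∀ i ∈ S \ T, |y i - m| ≤ dk := fun i hi => hm i (Finset.mem_sdiff.mp hi).1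
    rw [key]
    have b1 : |∑ i ∈ T \ S, (y i - m)| ≤ (T \ S).card * dk := by
      calc |∑ i ∈ T \ S, (y i - m)| ≤ ∑ i ∈ T \ S, |y i - m| := Finset.abs_sum_le_sum_abs _ _
        _ ≤ ∑ _i ∈ T \ S, dk := Finset.sum_le_sum hTb
        _ = (T \ S).card * dk := by rw [Finset.sum_const, nsmul_eq_mul]
    have b2 : |∑ i ∈ S \ T, (y i - m)| ≤ (S \ T).card * dk := by
      calc |∑ i ∈ S \ T, (y i - m)| ≤ ∑ i ∈ S \ T, |y i - m| := Finset.abs_sum_le_sum_abs _ _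
        _ ≤ ∑ _i ∈ S \ T, dk := Finset.sum_le_sum hSb
        _ = (S \ T).card * dk := by rw [Finset.sum_const, nsmul_eq_mul]
    have hcf : ((S \ T).card : ℝ) ≤ f := by exact_mod_cast htf
    have hcf' : ((T \ S).card : ℝ) * dk ≤ f * dk := by
      rw [hcards]; exact mul_le_mul_of_nonneg_right hcf hdk0
    have hcf'' : ((S \ T).card : ℝ) * dk ≤ f * dk := mul_le_mul_of_nonneg_right hcf hdk0
    calc |(∑ i ∈ T \ S, (y i - m)) - ∑ i ∈ S \ T, (y i - m)|
        ≤ |∑ i ∈ T \ S, (y i - m)| + |∑ i ∈ S \ T, (y i - m)| := abs_sub _ _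
      _ ≤ (T \ S).card * dk + (S \ T).card * dk := add_le_add b1 b2
      _ ≤ f * dk + f * dk := add_le_add hcf' hcf''
      _ = 2 * f * dk := by ring

lemma entry_le_norm {d : ℕ} (w : EuclideanSpace ℝ (Fin d)) (k : Fin d) : |w k| ≤ ‖w‖ := by
  rw [EuclideanSpace.norm_eq]
  have h1 : |w k| ^ 2 ≤ ∑ j, ‖w j‖ ^ 2 := by
    have := Finset.single_le_sum (f := fun j => ‖w j‖ ^ 2) (fun j _ => sq_nonneg _)
      (Finset.mem_univ k)
    simpa [Real.norm_eq_abs] using this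
  calc |w k| = Real.sqrt (|w k| ^ 2) := by rw [Real.sqrt_sq (abs_nonneg _)]
    _ ≤ _ := Real.sqrt_le_sqrt h1

/-- MeaMed is `(f, (2f/(n-f))·min{2√(n-f), √d})`-resilient averaging when `f < n/2`. -/
theorem meamed_resilient (n f d : ℕ) (hfn : 2 * f < n)
    (x : Fin n → EuclideanSpace ℝ (Fin d))
    (med : Fin d → ℝ) (hmed : ∀ k : Fin d, IsMedian (fun i => x i k) (med k))
    (C : Fin d → Finset (Fin n)) (hCcard : ∀ k, (C k).card = n - f)
    (hCclose : ∀ k : Fin d, ∀ i ∈ C k, ∀ j : Fin n, j ∉ C k →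
      |x i k - med k| ≤ |x j k - med k|)
    (c : EuclideanSpace ℝ (Fin d))
    (hc : ∀ k : Fin d, c k = ((n : ℝ) - f)⁻¹ * ∑ i ∈ C k, x i k)
    (S : Finset (Fin n)) (hS : S.card = n - f) :
    ‖c - (S.card : ℝ)⁻¹ • ∑ i ∈ S, x i‖ ≤
      (2 * (f : ℝ) / ((n : ℝ) - f)) * min (2 * Real.sqrt ((n : ℝ) - f)) (Real.sqrt (d : ℝ)) *
        diam x S := by
  classical
  have hfltn : f < n := by omega
  have hNpos : 0 < n - f := by omega
  have hcast : ((n : ℝ) - f) = ((n - f : ℕ) : ℝ) := by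
    rw [Nat.cast_sub hfltn.le]
  have hNR : (0:ℝ) < ((n - f : ℕ) : ℝ) := by exact_mod_cast hNpos
  set D := diam x S with hDdef
  have hD0 : 0 ≤ D := NNReal.coe_nonneg _
  have hDij : ∀ i ∈ S, ∀ j ∈ S, ‖x i - x j‖ ≤ D := by
    intro i hi j hj
    have hmem : (i, j) ∈ S ×ˢ S := Finset.mem_product.mpr ⟨hi, hj⟩
    have h := Finset.le_sup (f := fun p : Fin n × Fin n => ‖x p.1 - x p.2‖₊) hmem
    calc ‖x i - x j‖ = ((‖x i - x j‖₊ : NNReal) : ℝ) := (coe_nnnorm _).symm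
      _ ≤ D := NNReal.coe_le_coe.mpr h
  have hSne : S.Nonempty := Finset.card_pos.mp (by rw [hS]; exact hNpos)
  obtain ⟨i0, hi0⟩ := hSne
  have hSne : S.Nonempty := ⟨i0, hi0⟩
  set v := c - (S.card : ℝ)⁻¹ • ∑ i ∈ S, x i with hvdef
  have hvk : ∀ k, v k = ((n - f : ℕ) : ℝ)⁻¹ * ((∑ i ∈ C k, x i k) - ∑ i ∈ S, x i k) := by
    intro k
    have h1 : (∑ i ∈ S, x i) k = ∑ i ∈ S, x i k := by simp
    show c k - (S.card : ℝ)⁻¹ * (∑ i ∈ S, x i) k = _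
    rw [h1, hc k, hS, hcast]
    ring
  have hcoord : ∀ (k : Fin d) (dk : ℝ), (∀ i ∈ S, ∀ j ∈ S, |x i k - x j k| ≤ dk) →
      |v k| ≤ ((n - f : ℕ) : ℝ)⁻¹ * (2 * f * dk) := by
    intro k dk hdk
    rw [hvk k, abs_mul, abs_inv, Nat.abs_cast]
    refine mul_le_mul_of_nonneg_left ?_ (inv_nonneg.mpr (Nat.cast_nonneg _))
    exact coord_bound_s4 n f hfn (fun i => x i k) (med k) (hmed k).1 (hmed k).2 (C k) (hCcard k)
      (fun i hi j hj => hCclose k i hi j hj) S hS dk hdk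
  -- bound with sqrt d
  have hcoordA : ∀ k : Fin d, |v k| ≤ ((n - f : ℕ) : ℝ)⁻¹ * (2 * f * D) := by
    intro k
    refine hcoord k D fun i hi j hj => ?_
    exact le_trans (entry_le_norm (x i - x j) k) (hDij i hi j hj)
  have hKA0 : 0 ≤ ((n - f : ℕ) : ℝ)⁻¹ * (2 * f * D) := by positivity
  have HA : ‖v‖ ≤ Real.sqrt d * (((n - f : ℕ) : ℝ)⁻¹ * (2 * f * D)) := by
    rw [EuclideanSpace.norm_eq]
    have hsum : ∑ k, ‖v k‖ ^ 2 ≤ (Real.sqrt d * (((n - f : ℕ) : ℝ)⁻¹ * (2 * f * D))) ^ 2 := by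
      have : ∀ k : Fin d, ‖v k‖ ^ 2 ≤ (((n - f : ℕ) : ℝ)⁻¹ * (2 * f * D)) ^ 2 := by
        intro k
        rw [Real.norm_eq_abs]
        exact pow_le_pow_left₀ (abs_nonneg _) (hcoordA k) 2
      calc ∑ k, ‖v k‖ ^ 2 ≤ ∑ _k : Fin d, (((n - f : ℕ) : ℝ)⁻¹ * (2 * f * D)) ^ 2 :=
            Finset.sum_le_sum fun k _ => this k
        _ = d * (((n - f : ℕ) : ℝ)⁻¹ * (2 * f * D)) ^ 2 := by
            rw [Finset.sum_const, Finset.card_univ, Fintype.card_fin, nsmul_eq_mul]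
        _ = (Real.sqrt d * (((n - f : ℕ) : ℝ)⁻¹ * (2 * f * D))) ^ 2 := by
            conv_rhs => rw [mul_pow, Real.sq_sqrt (Nat.cast_nonneg d)]
    calc Real.sqrt (∑ k, ‖v k‖ ^ 2) ≤ Real.sqrt ((Real.sqrt d * (((n - f : ℕ) : ℝ)⁻¹ * (2 * f * D))) ^ 2) :=
          Real.sqrt_le_sqrt hsum
      _ = _ := Real.sqrt_sq (by positivity)
  -- bound with 2 sqrt (n-f)
  set M : Fin d → ℝ := fun k => S.sup' hSne fun i => |x i k - x i0 k| with hMdef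
  have hM0 : ∀ k, 0 ≤ M k := by
    intro k
    have h := Finset.le_sup' (fun i => |x i k - x i0 k|) hi0
    exact le_trans (abs_nonneg _) h
  have hcoordB : ∀ k : Fin d, |v k| ≤ ((n - f : ℕ) : ℝ)⁻¹ * (2 * f * (2 * M k)) := by
    intro k
    refine hcoord k (2 * M k) fun i hi j hj => ?_
    have h1 : |x i k - x i0 k| ≤ M k :=
      Finset.le_sup' (f := fun i => |x i k - x i0 k|) hi
    have h2 : |x j k - x i0 k| ≤ M k :=
      Finset.le_sup' (f := fun i => |x i k - x i0 k|) hj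
    calc |x i k - x j k| = |(x i k - x i0 k) - (x j k - x i0 k)| := by ring_nf
      _ ≤ |x i k - x i0 k| + |x j k - x i0 k| := abs_sub _ _
      _ ≤ 2 * M k := by linarith
  have hnormsq : ∀ i ∈ S, ∑ k, (x i k - x i0 k) ^ 2 ≤ D ^ 2 := by
    intro i hi
    have h1 : ‖x i - x i0‖ ^ 2 = ∑ k, ‖(x i - x i0) k‖ ^ 2 := by
      rw [EuclideanSpace.norm_eq, Real.sq_sqrt (Finset.sum_nonneg fun k _ => sq_nonneg _)]
    have h2 : ∑ k, (x i k - x i0 k) ^ 2 = ‖x i - x i0‖ ^ 2 := by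
      rw [h1]
      refine Finset.sum_congr rfl fun k _ => ?_
      rw [Real.norm_eq_abs, sq_abs]
      rfl
    rw [h2]
    exact pow_le_pow_left₀ (norm_nonneg _) (hDij i hi i0 hi0) 2
  have sumMsq : ∑ k, M k ^ 2 ≤ ((n - f : ℕ) : ℝ) * D ^ 2 := by
    calc ∑ k, M k ^ 2 ≤ ∑ k, ∑ i ∈ S, (x i k - x i0 k) ^ 2 := by
          refine Finset.sum_le_sum fun k _ => ?_
          obtain ⟨a, haS, hMa⟩ := Finset.exists_mem_eq_sup' hSne fun i => |x i k - x i0 k|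
          have hMk : M k = |x a k - x i0 k| := hMa
          rw [hMk, sq_abs]
          exact Finset.single_le_sum (fun i _ => sq_nonneg ((x i k - x i0 k))) haS
      _ = ∑ i ∈ S, ∑ k, (x i k - x i0 k) ^ 2 := Finset.sum_comm
      _ ≤ ∑ _i ∈ S, D ^ 2 := Finset.sum_le_sum hnormsq
      _ = ((n - f : ℕ) : ℝ) * D ^ 2 := by rw [Finset.sum_const, hS, nsmul_eq_mul]
  have HB : ‖v‖ ≤ 2 * Real.sqrt ((n - f : ℕ) : ℝ) * (((n - f : ℕ) : ℝ)⁻¹ * (2 * f * D)) := by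
    rw [EuclideanSpace.norm_eq]
    have hsum : ∑ k, ‖v k‖ ^ 2
        ≤ (2 * Real.sqrt ((n - f : ℕ) : ℝ) * (((n - f : ℕ) : ℝ)⁻¹ * (2 * f * D))) ^ 2 := by
      have step : ∀ k : Fin d, ‖v k‖ ^ 2 ≤ (((n - f : ℕ) : ℝ)⁻¹ * (2 * f * (2 * M k))) ^ 2 := by
        intro k
        rw [Real.norm_eq_abs]
        exact pow_le_pow_left₀ (abs_nonneg _) (hcoordB k) 2
      calc ∑ k, ‖v k‖ ^ 2 ≤ ∑ k, (((n - f : ℕ) : ℝ)⁻¹ * (2 * f * (2 * M k))) ^ 2 :=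
            Finset.sum_le_sum fun k _ => step k
        _ = (((n - f : ℕ) : ℝ)⁻¹ * (2 * f) * 2) ^ 2 * ∑ k, M k ^ 2 := by
            rw [Finset.mul_sum]
            refine Finset.sum_congr rfl fun k _ => by ring
        _ ≤ (((n - f : ℕ) : ℝ)⁻¹ * (2 * f) * 2) ^ 2 * (((n - f : ℕ) : ℝ) * D ^ 2) := by
            refine mul_le_mul_of_nonneg_left sumMsq (by positivity)
        _ = (2 * Real.sqrt ((n - f : ℕ) : ℝ) * (((n - f : ℕ) : ℝ)⁻¹ * (2 * f * D))) ^ 2 := by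
            conv_rhs => rw [mul_pow, mul_pow, Real.sq_sqrt (Nat.cast_nonneg (n - f))]
            ring
    calc Real.sqrt (∑ k, ‖v k‖ ^ 2)
        ≤ Real.sqrt ((2 * Real.sqrt ((n - f : ℕ) : ℝ) * (((n - f : ℕ) : ℝ)⁻¹ * (2 * f * D))) ^ 2) :=
          Real.sqrt_le_sqrt hsum
      _ = _ := Real.sqrt_sq (by positivity)
  rw [hcast]
  rcases le_total (2 * Real.sqrt ((n - f : ℕ) : ℝ)) (Real.sqrt d) with h | h
  · rw [min_eq_left h]
    calc ‖v‖ ≤ 2 * Real.sqrt ((n - f : ℕ) : ℝ) * (((n - f : ℕ) : ℝ)⁻¹ * (2 * f * D)) := HB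
      _ = 2 * (f : ℝ) / ((n - f : ℕ) : ℝ) * (2 * Real.sqrt ((n - f : ℕ) : ℝ)) * D := by
          field_simp
  · rw [min_eq_right h]
    calc ‖v‖ ≤ Real.sqrt d * (((n - f : ℕ) : ℝ)⁻¹ * (2 * f * D)) := HA
      _ = 2 * (f : ℝ) / ((n - f : ℕ) : ℝ) * Real.sqrt d * D := by
          field_simp
end

section
/- If f < n/2, then the Geometric Median rule GM is an (f, λ)-resilient averaging rule with λ = 1 + (n−f)/√((n−2f)·n). That is, for any x₁,…,xₙ ∈ ℝ^d and any S ⊆ {1,…,n} with |S| = n−f, ‖GM(x₁,…,xₙ) − x̄_S‖ ≤ (1 + (n−f)/√((n−2f)n)) · max_{i,j∈S} ‖xᵢ − xⱼ‖. -/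
local notation "⟪" x ", " y "⟫" => @inner ℝ _ _ x y

/-- Angle bound: if `‖a‖ ≤ D ≤ t` and `‖u‖ = 1`, the cosine of the angle between `u`
and `t • u - a` is at least `√(t² - D²)/t`. -/
lemma lemA {F : Type*} [NormedAddCommGroup F] [InnerProductSpace ℝ F]
    (u a : F) (t D : ℝ) (hu : ‖u‖ = 1) (ha : ‖a‖ ≤ D) (hDt : D ≤ t) :
    Real.sqrt (t ^ 2 - D ^ 2) / t * ‖t • u - a‖ ≤ ⟪u, t • u - a⟫ := by
  have hD0 : 0 ≤ D := le_trans (norm_nonneg a) ha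
  have ht0 : 0 ≤ t := le_trans hD0 hDt
  rcases ht0.eq_or_lt with h0 | ht
  · have hD : D = 0 := le_antisymm (h0 ▸ hDt) hD0
    have haz : a = 0 := norm_eq_zero.mp (le_antisymm (ha.trans hD.le) (norm_nonneg a))
    simp [← h0, hD, haz]
  · set c₀ : ℝ := ⟪u, a⟫ with hc₀def
    have hinner : ⟪u, t • u - a⟫ = t - c₀ := by
      rw [inner_sub_right, real_inner_smul_right, real_inner_self_eq_norm_sq, hu]
      ring
    have hc₀ : |c₀| ≤ ‖a‖ := by
      have := abs_real_inner_le_norm u a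
      simpa [hu] using this
    have hc₀D : c₀ ≤ D := le_trans (le_trans (le_abs_self c₀) hc₀) ha
    have hc₀D' : -D ≤ c₀ := by
      have := neg_abs_le c₀
      have h2 : -‖a‖ ≤ c₀ := by linarith [abs_nonneg c₀, hc₀, neg_abs_le c₀]
      linarith
    have hnorm : ‖t • u - a‖ ^ 2 = t ^ 2 - 2 * t * c₀ + ‖a‖ ^ 2 := by
      rw [norm_sub_sq_real, norm_smul, real_inner_smul_left, hu, Real.norm_eq_abs,
        abs_of_pos ht]
      ring
    have htD2 : 0 ≤ t ^ 2 - D ^ 2 := by nlinarith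
    set s1 : ℝ := Real.sqrt (t ^ 2 - D ^ 2) with hs1def
    have hs1sq : s1 ^ 2 = t ^ 2 - D ^ 2 := Real.sq_sqrt htD2
    have hs1nn : 0 ≤ s1 := Real.sqrt_nonneg _
    have hwnn : 0 ≤ ‖t • u - a‖ := norm_nonneg _
    have hsa : ‖a‖ ^ 2 ≤ D ^ 2 := by nlinarith [norm_nonneg a]
    have hca : c₀ ^ 2 ≤ ‖a‖ ^ 2 := by nlinarith [abs_nonneg c₀, sq_abs c₀]
    have hrhs : 0 ≤ t - c₀ := by linarith
    -- key squared inequality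
    have hkey : s1 ^ 2 * ‖t • u - a‖ ^ 2 ≤ t ^ 2 * (t - c₀) ^ 2 := by
      rw [hs1sq, hnorm]
      nlinarith [sq_nonneg (t * c₀ - D ^ 2), mul_nonneg htD2 (sub_nonneg.mpr hsa)]
    have h1 : s1 * ‖t • u - a‖ ≤ t * (t - c₀) := by
      nlinarith [mul_nonneg hs1nn hwnn, mul_nonneg ht0 hrhs]
    rw [hinner, div_mul_eq_mul_div, div_le_iff₀ ht]
    nlinarith [h1]

set_option maxHeartbeats 1000000 in
/-- The geometric median is `(f, 1+(n-f)/√((n-2f)n))`-resilient averaging when `f < n/2`. -/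
theorem gm_resilient (n f d : ℕ) (hfn : 2 * f < n)
    (x : Fin n → EuclideanSpace ℝ (Fin d))
    (gm : EuclideanSpace ℝ (Fin d))
    (hgm : ∀ z : EuclideanSpace ℝ (Fin d),
      ∑ i : Fin n, ‖gm - x i‖ ≤ ∑ i : Fin n, ‖z - x i‖)
    (S : Finset (Fin n)) (hS : S.card = n - f) :
    ‖gm - (S.card : ℝ)⁻¹ • ∑ i ∈ S, x i‖ ≤
      (1 + ((n : ℝ) - f) / Real.sqrt (((n : ℝ) - 2 * f) * n)) * diam x S := by
  classical
  have hfn' : f < n := by omega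
  set c : EuclideanSpace ℝ (Fin d) := (S.card : ℝ)⁻¹ • ∑ i ∈ S, x i with hc
  set D : ℝ := diam x S with hDdef
  set L : ℝ := ((n : ℝ) - f) / Real.sqrt (((n : ℝ) - 2 * f) * n) with hLdef
  have hcardR : (S.card : ℝ) = (n : ℝ) - f := by
    rw [hS, Nat.cast_sub hfn'.le]
  have hcard_pos : 0 < S.card := by omega
  have hcardne : (S.card : ℝ) ≠ 0 := Nat.cast_ne_zero.mpr hcard_pos.ne'
  have hcompl : (Sᶜ.card : ℝ) = f := by
    rw [Finset.card_compl, Fintype.card_fin, hS]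
    have : n - (n - f) = f := by omega
    rw [this]
  have hD0 : 0 ≤ D := by rw [hDdef]; unfold diam; positivity
  have hxij : ∀ i ∈ S, ∀ j ∈ S, ‖x i - x j‖ ≤ D := by
    intro i hi j hj
    have hmem : (i, j) ∈ S ×ˢ S := Finset.mem_product.mpr ⟨hi, hj⟩
    have := Finset.le_sup (f := fun p : Fin n × Fin n => ‖x p.1 - x p.2‖₊) hmem
    rw [hDdef]; unfold diam
    exact_mod_cast this
  have ha : ∀ i ∈ S, ‖x i - c‖ ≤ D := by
    intro i hi
    have heq : x i - c = (S.card : ℝ)⁻¹ • ∑ j ∈ S, (x i - x j) := by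
      rw [Finset.sum_sub_distrib, Finset.sum_const, smul_sub, hc,
        ← Nat.cast_smul_eq_nsmul ℝ, smul_smul, inv_mul_cancel₀ hcardne, one_smul]
    rw [heq, norm_smul, Real.norm_eq_abs, abs_of_pos (by positivity)]
    have h1 : ‖∑ j ∈ S, (x i - x j)‖ ≤ ∑ j ∈ S, ‖x i - x j‖ := norm_sum_le _ _
    have h2 : ∑ j ∈ S, ‖x i - x j‖ ≤ S.card • D :=
      Finset.sum_le_card_nsmul S _ D (fun j hj => hxij i hi j hj)
    rw [nsmul_eq_mul] at h2
    calc (S.card : ℝ)⁻¹ * ‖∑ j ∈ S, (x i - x j)‖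
        ≤ (S.card : ℝ)⁻¹ * ((S.card : ℝ) * D) := by
          apply mul_le_mul_of_nonneg_left (h1.trans h2) (by positivity)
      _ = D := by field_simp
  -- positivity facts about L
  have h2fn : (2 * f : ℝ) < n := by exact_mod_cast hfn
  have hfnR : (f : ℝ) < n := by exact_mod_cast hfn'
  have hnpos : (0 : ℝ) < n := by exact_mod_cast (show 0 < n by omega)
  have hP : (0 : ℝ) < ((n : ℝ) - 2 * f) * n := by nlinarith
  have hsqP : (0 : ℝ) < Real.sqrt (((n : ℝ) - 2 * f) * n) := Real.sqrt_pos.mpr hP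
  have hnf0 : (0 : ℝ) ≤ (n : ℝ) - f := by linarith
  have hL1 : 1 ≤ L := by
    rw [hLdef, le_div_iff₀ hsqP, one_mul]
    calc Real.sqrt (((n : ℝ) - 2 * f) * n) ≤ Real.sqrt (((n : ℝ) - f) ^ 2) :=
          Real.sqrt_le_sqrt (by nlinarith)
      _ = (n : ℝ) - f := Real.sqrt_sq hnf0
  have hLD0 : 0 ≤ L * D := mul_nonneg (by linarith) hD0
  -- main bound
  have hkey : ‖gm - c‖ ≤ L * D := by
    by_contra hcon
    push_neg at hcon
    set δ : ℝ := ‖gm - c‖ with hδdef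
    have hδ0 : 0 < δ := lt_of_le_of_lt hLD0 hcon
    set t : ℝ := (L * D + δ) / 2 with htdef
    have htLD : L * D < t := by rw [htdef]; linarith
    have htδ : t < δ := by rw [htdef]; linarith
    have hDLD : D ≤ L * D := le_mul_of_one_le_left hD0 hL1
    have htD : D < t := lt_of_le_of_lt hDLD htLD
    have ht0 : 0 < t := lt_of_le_of_lt hLD0 htLD
    set u : EuclideanSpace ℝ (Fin d) := δ⁻¹ • (gm - c) with hudef
    have hu : ‖u‖ = 1 := by
      rw [hudef, norm_smul, Real.norm_eq_abs, abs_of_pos (by positivity), ← hδdef,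
        inv_mul_cancel₀ hδ0.ne']
    set y : EuclideanSpace ℝ (Fin d) := c + t • u with hydef
    set κ : ℝ := Real.sqrt (t ^ 2 - D ^ 2) / t with hκdef
    have hκ0 : 0 ≤ κ := by positivity
    have hδt : 0 < δ - t := by linarith
    have hδu : δ • u = gm - c := by
      rw [hudef, smul_smul, mul_inv_cancel₀ hδ0.ne', one_smul]
    have hgmy : ∀ i : Fin n, gm - x i = (y - x i) + (δ - t) • u := by
      intro i
      have hgm' : gm = c + δ • u := by rw [hδu]; abel
      rw [hgm', hydef, sub_smul]; abel
    -- angle / cosine bound against f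
    have hκf : (f : ℝ) < ((n : ℝ) - f) * κ := by
      have hstep : ((n : ℝ) - f) * D < t * Real.sqrt (((n : ℝ) - 2 * f) * n) := by
        have : L * D = ((n : ℝ) - f) * D / Real.sqrt (((n : ℝ) - 2 * f) * n) := by
          rw [hLdef]; ring
        rw [this, div_lt_iff₀ hsqP] at htLD
        exact htLD
      have hPt : ((n : ℝ) - f) ^ 2 * D ^ 2 < (((n : ℝ) - 2 * f) * n) * t ^ 2 := by
        nlinarith [hstep, mul_nonneg hnf0 hD0, Real.sq_sqrt hP.le,
          Real.sqrt_nonneg (((n : ℝ) - 2 * f) * n)]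
      have htD2 : (0 : ℝ) ≤ t ^ 2 - D ^ 2 := by nlinarith [htD, hD0]
      have hs1sq : Real.sqrt (t ^ 2 - D ^ 2) ^ 2 = t ^ 2 - D ^ 2 := Real.sq_sqrt htD2
      have hs1nn : 0 ≤ Real.sqrt (t ^ 2 - D ^ 2) := Real.sqrt_nonneg _
      have hft : (0 : ℝ) ≤ (f : ℝ) * t := by positivity
      have h3 : (f : ℝ) * t < ((n : ℝ) - f) * Real.sqrt (t ^ 2 - D ^ 2) := by
        nlinarith [hs1sq, hs1nn, hPt, mul_nonneg hnf0 hs1nn]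
      rw [hκdef, mul_div_assoc', lt_div_iff₀ ht0]
      linarith [h3]
    -- pointwise estimates
    have hS_pt : ∀ i ∈ S, ‖y - x i‖ + (δ - t) * κ ≤ ‖gm - x i‖ := by
      intro i hi
      have hw_eq : y - x i = t • u - (x i - c) := by rw [hydef]; abel
      have hA : κ * ‖y - x i‖ ≤ ⟪u, y - x i⟫ := by
        rw [hw_eq, hκdef]
        exact lemA u (x i - c) t D hu (ha i hi) htD.le
      have hw_pos : 0 < ‖y - x i‖ := by
        have h1 : ‖t • u‖ - ‖x i - c‖ ≤ ‖t • u - (x i - c)‖ := norm_sub_norm_le _ _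
        rw [norm_smul, Real.norm_eq_abs, abs_of_pos ht0, hu, mul_one] at h1
        rw [hw_eq]
        have := ha i hi
        linarith
      have hB : ⟪(y - x i) + (δ - t) • u, y - x i⟫ ≤ ‖(y - x i) + (δ - t) • u‖ * ‖y - x i‖ :=
        real_inner_le_norm _ _
      have hexp : ⟪(y - x i) + (δ - t) • u, y - x i⟫
          = ‖y - x i‖ ^ 2 + (δ - t) * ⟪u, y - x i⟫ := by
        rw [inner_add_left, real_inner_smul_left, real_inner_self_eq_norm_sq]
      have h2 : (‖y - x i‖ + (δ - t) * κ) * ‖y - x i‖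
          ≤ ‖(y - x i) + (δ - t) • u‖ * ‖y - x i‖ := by
        have h3 : (δ - t) * (κ * ‖y - x i‖) ≤ (δ - t) * ⟪u, y - x i⟫ :=
          mul_le_mul_of_nonneg_left hA hδt.le
        nlinarith [h3, hB, hexp]
      have h4 := le_of_mul_le_mul_right h2 hw_pos
      rw [hgmy i]
      exact h4
    have hSc_pt : ∀ i ∈ Sᶜ, ‖y - x i‖ - (δ - t) ≤ ‖gm - x i‖ := by
      intro i _
      rw [hgmy i]
      have h1 : ‖y - x i‖ ≤ ‖(y - x i) + (δ - t) • u‖ + ‖(δ - t) • u‖ := by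
        have := norm_add_le ((y - x i) + (δ - t) • u) (-((δ - t) • u))
        simpa using this
      rw [norm_smul, Real.norm_eq_abs, abs_of_nonneg hδt.le, hu, mul_one] at h1
      linarith
    -- summing
    have hsum1 : ∑ i ∈ S, ‖y - x i‖ + (S.card : ℝ) * ((δ - t) * κ)
        ≤ ∑ i ∈ S, ‖gm - x i‖ := by
      have h := Finset.sum_le_sum hS_pt
      rw [Finset.sum_add_distrib, Finset.sum_const, nsmul_eq_mul] at h
      exact h
    have hsum2 : ∑ i ∈ Sᶜ, ‖y - x i‖ - (Sᶜ.card : ℝ) * (δ - t)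
        ≤ ∑ i ∈ Sᶜ, ‖gm - x i‖ := by
      have h := Finset.sum_le_sum hSc_pt
      rw [Finset.sum_sub_distrib, Finset.sum_const, nsmul_eq_mul] at h
      exact h
    have hsplit1 : ∑ i ∈ S, ‖gm - x i‖ + ∑ i ∈ Sᶜ, ‖gm - x i‖ = ∑ i : Fin n, ‖gm - x i‖ :=
      Finset.sum_add_sum_compl S _
    have hsplit2 : ∑ i ∈ S, ‖y - x i‖ + ∑ i ∈ Sᶜ, ‖y - x i‖ = ∑ i : Fin n, ‖y - x i‖ :=
      Finset.sum_add_sum_compl S _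
    have hmin := hgm y
    rw [hcardR] at hsum1
    rw [hcompl] at hsum2
    -- conclude contradiction
    have hfinal : ((n : ℝ) - f) * ((δ - t) * κ) ≤ (f : ℝ) * (δ - t) := by linarith
    nlinarith [hκf, hδt, hfinal]
  have hfin : L * D ≤ (1 + L) * D := by
    have : (1 + L) * D = D + L * D := by ring
    rw [this]
    linarith
  exact hkey.trans hfin
end

section
/- Let y₁,…,yₙ be real numbers, f < n/2, and S ⊆ [n] with |S| = n−f. Then the average over S satisfies |(1/(n−f)) Σ_{i∈S} yᵢ − Median(y₁,…,yₙ)| ≤ (n/(2(n−f))) · max_{i,j∈S} (yᵢ − yⱼ). -/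
open scoped Classical

/-- The average over `S` is within `(n/(2(n-f))) · max_{i,j∈S}(yᵢ - yⱼ)` of the median. -/
theorem median_average_bound (n f : ℕ) (hfn : 2 * f < n) (y : Fin n → ℝ) (m : ℝ)
    (hm : IsMedian y m) (S : Finset (Fin n)) (hS : S.card = n - f) (hne : S.Nonempty) :
    |((n : ℝ) - f)⁻¹ * ∑ i ∈ S, y i - m| ≤
      ((n : ℝ) / (2 * ((n : ℝ) - f))) *
        (S ×ˢ S).sup' (hne.product hne) (fun p => y p.1 - y p.2) := by
  have hfn' : f < n := by omega
  have hfle : f ≤ n := hfn'.le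
  have hpos : (0:ℝ) < (n:ℝ) - f := by
    have : (f:ℝ) < n := by exact_mod_cast hfn'
    linarith
  -- some element of S below median
  obtain ⟨i0, hi0S, hi0⟩ : ∃ i ∈ S, y i ≤ m := by
    by_contra h
    push_neg at h
    have hsub : Finset.univ.filter (fun i => y i ≤ m) ⊆ Finset.univ \ S := by
      intro i hi
      simp only [Finset.mem_filter] at hi
      simp only [Finset.mem_sdiff, Finset.mem_univ, true_and]
      intro hiS
      exact absurd hi.2 (not_le.2 (h i hiS))
    have hcard : (Finset.univ.filter (fun i => y i ≤ m)).card ≤ f := by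
      have h2 := Finset.card_le_card hsub
      rwa [Finset.card_sdiff_of_subset (Finset.subset_univ S), Finset.card_univ, Fintype.card_fin, hS,
        Nat.sub_sub_self hfle] at h2
    have h1 := hm.1
    have h3 : ((Finset.univ.filter (fun i => y i ≤ m)).card : ℝ) ≤ f := by exact_mod_cast hcard
    have h4 : (n:ℝ) ≤ 2 * f := by linarith
    have : n ≤ 2 * f := by exact_mod_cast h4
    omega
  -- some element of S above median
  obtain ⟨j0, hj0S, hj0⟩ : ∃ j ∈ S, m ≤ y j := by
    by_contra h
    push_neg at h
    have hsub : Finset.univ.filter (fun i => m ≤ y i) ⊆ Finset.univ \ S := by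
      intro i hi
      simp only [Finset.mem_filter] at hi
      simp only [Finset.mem_sdiff, Finset.mem_univ, true_and]
      intro hiS
      exact absurd hi.2 (not_le.2 (h i hiS))
    have hcard : (Finset.univ.filter (fun i => m ≤ y i)).card ≤ f := by
      have h2 := Finset.card_le_card hsub
      rwa [Finset.card_sdiff_of_subset (Finset.subset_univ S), Finset.card_univ, Fintype.card_fin, hS,
        Nat.sub_sub_self hfle] at h2
    have h1 := hm.2
    have h3 : ((Finset.univ.filter (fun i => m ≤ y i)).card : ℝ) ≤ f := by exact_mod_cast hcard
    have h4 : (n:ℝ) ≤ 2 * f := by linarith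
    have : n ≤ 2 * f := by exact_mod_cast h4
    omega
  set D := (S ×ˢ S).sup' (hne.product hne) (fun p => y p.1 - y p.2) with hDdef
  have hle : ∀ i ∈ S, ∀ j ∈ S, y i - y j ≤ D := fun i hi j hj =>
    Finset.le_sup' (f := fun p : Fin n × Fin n => y p.1 - y p.2)
      (show (i, j) ∈ S ×ˢ S from Finset.mem_product.mpr ⟨hi, hj⟩)
  have hD0 : 0 ≤ D := by have := hle i0 hi0S i0 hi0S; linarith
  -- upper bound on the centered sum
  have hup : ∑ i ∈ S, (y i - m) ≤ ((n:ℝ)/2) * D := by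
    set B := S.filter (fun i => m < y i) with hB
    have hsplit : ∑ i ∈ S, (y i - m) ≤ ∑ i ∈ B, (y i - m) := by
      have hsum := Finset.sum_filter_add_sum_filter_not S (fun i => m < y i)
        (fun i => y i - m)
      have hnp : ∑ i ∈ S.filter (fun i => ¬ m < y i), (y i - m) ≤ 0 :=
        Finset.sum_nonpos (fun i hi => by
          have := (Finset.mem_filter.mp hi).2
          rw [not_lt] at this
          linarith)
      linarith
    have hcardB : (B.card:ℝ) ≤ (n:ℝ)/2 := by
      have hdisj : Disjoint B (Finset.univ.filter fun i => y i ≤ m) := by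
        rw [Finset.disjoint_left]
        intro a ha hb
        have h1 := (Finset.mem_filter.mp ha).2
        have h2 := (Finset.mem_filter.mp hb).2
        exact absurd h2 (not_le.2 h1)
      have hc : B.card + (Finset.univ.filter fun i => y i ≤ m).card ≤ n := by
        calc B.card + (Finset.univ.filter fun i => y i ≤ m).card
            = (B ∪ Finset.univ.filter fun i => y i ≤ m).card :=
              (Finset.card_union_of_disjoint hdisj).symm
          _ ≤ (Finset.univ : Finset (Fin n)).card := Finset.card_le_card (Finset.subset_univ _)
          _ = n := by simp
      have h1 := hm.1
      have h2 : (B.card:ℝ) + ((Finset.univ.filter fun i => y i ≤ m).card:ℝ) ≤ n := by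
        exact_mod_cast hc
      linarith
    have hterm : ∑ i ∈ B, (y i - m) ≤ (B.card:ℝ) * D := by
      have := Finset.sum_le_card_nsmul B (fun i => y i - m) D (fun i hi => by
        show y i - m ≤ D
        have hiS : i ∈ S := (Finset.mem_filter.mp hi).1
        have := hle i hiS i0 hi0S
        linarith)
      simpa [nsmul_eq_mul] using this
    calc ∑ i ∈ S, (y i - m) ≤ ∑ i ∈ B, (y i - m) := hsplit
      _ ≤ (B.card:ℝ) * D := hterm
      _ ≤ ((n:ℝ)/2) * D := mul_le_mul_of_nonneg_right hcardB hD0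
  -- lower bound on the centered sum
  have hlo : -(((n:ℝ)/2) * D) ≤ ∑ i ∈ S, (y i - m) := by
    set A := S.filter (fun i => y i < m) with hA
    have hsplit : ∑ i ∈ A, (y i - m) ≤ ∑ i ∈ S, (y i - m) := by
      have hsum := Finset.sum_filter_add_sum_filter_not S (fun i => y i < m)
        (fun i => y i - m)
      have hnp : 0 ≤ ∑ i ∈ S.filter (fun i => ¬ y i < m), (y i - m) :=
        Finset.sum_nonneg (fun i hi => by
          have := (Finset.mem_filter.mp hi).2
          rw [not_lt] at this
          linarith)
      linarith
    have hcardA : (A.card:ℝ) ≤ (n:ℝ)/2 := by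
      have hdisj : Disjoint A (Finset.univ.filter fun i => m ≤ y i) := by
        rw [Finset.disjoint_left]
        intro a ha hb
        have h1 := (Finset.mem_filter.mp ha).2
        have h2 := (Finset.mem_filter.mp hb).2
        exact absurd h2 (not_le.2 h1)
      have hc : A.card + (Finset.univ.filter fun i => m ≤ y i).card ≤ n := by
        calc A.card + (Finset.univ.filter fun i => m ≤ y i).card
            = (A ∪ Finset.univ.filter fun i => m ≤ y i).card :=
              (Finset.card_union_of_disjoint hdisj).symm
          _ ≤ (Finset.univ : Finset (Fin n)).card := Finset.card_le_card (Finset.subset_univ _)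
          _ = n := by simp
      have h1 := hm.2
      have h2 : (A.card:ℝ) + ((Finset.univ.filter fun i => m ≤ y i).card:ℝ) ≤ n := by
        exact_mod_cast hc
      linarith
    have hterm : -((A.card:ℝ) * D) ≤ ∑ i ∈ A, (y i - m) := by
      have := Finset.card_nsmul_le_sum A (fun i => y i - m) (-D) (fun i hi => by
        show -D ≤ y i - m
        have hiS : i ∈ S := (Finset.mem_filter.mp hi).1
        have := hle j0 hj0S i hiS
        linarith)
      have h2 : (A.card:ℝ) * (-D) ≤ ∑ i ∈ A, (y i - m) := by
        simpa [nsmul_eq_mul] using this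
      linarith
    have : -(((n:ℝ)/2) * D) ≤ -((A.card:ℝ) * D) := by
      have := mul_le_mul_of_nonneg_right hcardA hD0
      linarith
    linarith
  have key : |∑ i ∈ S, (y i - m)| ≤ ((n:ℝ)/2) * D := abs_le.mpr ⟨hlo, hup⟩
  have hcards : ((S.card : ℕ) : ℝ) = (n:ℝ) - f := by
    rw [hS, Nat.cast_sub hfle]
  have hsum : ∑ i ∈ S, (y i - m) = (∑ i ∈ S, y i) - ((n:ℝ) - f) * m := by
    rw [Finset.sum_sub_distrib, Finset.sum_const, nsmul_eq_mul, hcards]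
  have hne0 : ((n:ℝ) - f) ≠ 0 := ne_of_gt hpos
  have heq : ((n:ℝ) - f)⁻¹ * ∑ i ∈ S, y i - m
      = ((n:ℝ) - f)⁻¹ * ((∑ i ∈ S, y i) - ((n:ℝ) - f) * m) := by
    field_simp
  rw [heq, ← hsum, abs_mul, abs_of_pos (inv_pos.2 hpos)]
  have hrs : (n:ℝ) / (2 * ((n:ℝ) - f)) * D = ((n:ℝ) - f)⁻¹ * (((n:ℝ)/2) * D) := by
    rw [inv_mul_eq_div, div_mul_eq_mul_div, div_eq_div_iff (by positivity) (ne_of_gt hpos)]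
    ring
  rw [hrs]
  exact mul_le_mul_of_nonneg_left key (inv_nonneg.mpr hpos.le)
end

section
/- If f < n/2, then the Coordinate-Wise Median rule CWMed is an (f, λ)-resilient averaging rule with λ = (n/(2(n−f))) · min{2√(n−f), √d}. -/
open scoped Classical

/-- A coordinate of a Euclidean vector is bounded by its norm. -/
lemma abs_coord_le_norm {d : ℕ} (v : EuclideanSpace ℝ (Fin d)) (k : Fin d) : |v k| ≤ ‖v‖ := by
  rw [EuclideanSpace.norm_eq, ← Real.sqrt_sq_eq_abs]
  apply Real.sqrt_le_sqrt
  have := Finset.single_le_sum (f := fun i => ‖v i‖ ^ 2) (fun i _ => sq_nonneg _)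
    (Finset.mem_univ k)
  simpa [Real.norm_eq_abs, sq_abs] using this

/-- Sums in `EuclideanSpace` are computed coordinatewise. -/
lemma euclid_sum_apply {n d : ℕ} (x : Fin n → EuclideanSpace ℝ (Fin d))
    (S : Finset (Fin n)) (k : Fin d) : (∑ i ∈ S, x i) k = ∑ i ∈ S, x i k := by
  induction S using Finset.induction with
  | empty => simp
  | insert _ _ h ih => rw [Finset.sum_insert h, Finset.sum_insert h, PiLp.add_apply, ih]

/-- If at least `n/2` of all indices satisfy `p`, then at least `n/2 - f` of the
indices in a set of size `n - f` satisfy `p`. -/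
lemma filter_card_ge {n f : ℕ} (S : Finset (Fin n)) (hS : S.card = n - f)
    (p : Fin n → Prop) [DecidablePred p]
    (hp : (n : ℝ) / 2 ≤ ((Finset.univ.filter p).card : ℝ)) :
    (n : ℝ) / 2 - f ≤ ((S.filter p).card : ℝ) := by
  set T := Finset.univ.filter p with hT
  have h2 : (T \ S).card ≤ f := by
    have hsub : T \ S ⊆ Finset.univ \ S := Finset.sdiff_subset_sdiff (Finset.subset_univ T) le_rfl
    have := Finset.card_le_card hsub
    rw [Finset.card_sdiff_of_subset (Finset.subset_univ S), Finset.card_univ, Fintype.card_fin, hS] at this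
    omega
  have h3 : T ∩ S = S.filter p := by
    ext i; simp [hT, Finset.mem_filter, and_comm]
  have h1 : (T ∩ S).card + (T \ S).card = T.card := Finset.card_inter_add_card_sdiff T S
  have h4 : T.card ≤ (S.filter p).card + f := by rw [← h3]; omega
  have h4' : (T.card : ℝ) ≤ ((S.filter p).card : ℝ) + f := by exact_mod_cast h4
  linarith

/-- One-sided sum bound for the median. -/
lemma sum_side_bound {n f : ℕ} (hfn : 2 * f < n) (y : Fin n → ℝ) (m : ℝ)
    (S : Finset (Fin n)) (hS : S.card = n - f)
    (D : ℝ) (hD0 : 0 ≤ D)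
    (j₁ : Fin n) (hj₁S : j₁ ∈ S) (hj₁ : m ≤ y j₁)
    (hDj : ∀ i ∈ S, y j₁ - y i ≤ D)
    (hcard : (n : ℝ) / 2 - f ≤ ((S.filter fun i => m ≤ y i).card : ℝ)) :
    ∑ i ∈ S, (m - y i) ≤ (n : ℝ) / 2 * D := by
  have hfn' : f ≤ n := by omega
  have hcardS : (S.card : ℝ) = (n : ℝ) - f := by rw [hS, Nat.cast_sub hfn']
  have hle : ∀ i ∈ S, m - y i ≤ if m ≤ y i then 0 else D := by
    intro i hi
    split
    · linarith
    · have := hDj i hi; linarith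
  calc ∑ i ∈ S, (m - y i) ≤ ∑ i ∈ S, (if m ≤ y i then 0 else D) := Finset.sum_le_sum hle
    _ = ((S.filter fun i => ¬ m ≤ y i).card : ℝ) * D := by
        rw [Finset.sum_ite, Finset.sum_const, Finset.sum_const]
        simp [nsmul_eq_mul]
    _ ≤ (n : ℝ) / 2 * D := by
        apply mul_le_mul_of_nonneg_right _ hD0
        have hsplit : (S.filter fun i => m ≤ y i).card + (S.filter fun i => ¬ m ≤ y i).card
            = S.card := Finset.card_filter_add_card_filter_not _
        have : ((S.filter fun i => m ≤ y i).card : ℝ)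
            + ((S.filter fun i => ¬ m ≤ y i).card : ℝ) = (n : ℝ) - f := by
          rw [← hcardS]; exact_mod_cast hsplit
        linarith

/-- Key scalar estimate: the sum of deviations of a median from values in an
honest set of size `n - f` is at most `(n/2) · D` in absolute value. -/
lemma median_sum_bound {n f : ℕ} (hfn : 2 * f < n) (y : Fin n → ℝ) (m : ℝ)
    (hm : IsMedian y m) (S : Finset (Fin n)) (hS : S.card = n - f)
    (D : ℝ) (hD : ∀ i ∈ S, ∀ j ∈ S, y i - y j ≤ D) :
    |∑ i ∈ S, (m - y i)| ≤ (n : ℝ) / 2 * D := by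
  have hA := filter_card_ge S hS (fun i => y i ≤ m) hm.1
  have hA' := filter_card_ge S hS (fun i => m ≤ y i) hm.2
  have hhalf : (0 : ℝ) < (n : ℝ) / 2 - f := by
    have : (2 * f : ℝ) < n := by exact_mod_cast hfn
    linarith
  have hAne : (S.filter fun i => y i ≤ m).Nonempty := by
    rw [← Finset.card_pos]
    have : (0 : ℝ) < ((S.filter fun i => y i ≤ m).card : ℝ) := lt_of_lt_of_le hhalf hA
    exact_mod_cast this
  have hA'ne : (S.filter fun i => m ≤ y i).Nonempty := by
    rw [← Finset.card_pos]
    have : (0 : ℝ) < ((S.filter fun i => m ≤ y i).card : ℝ) := lt_of_lt_of_le hhalf hA'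
    exact_mod_cast this
  obtain ⟨j₀, hj₀⟩ := hAne
  obtain ⟨j₁, hj₁⟩ := hA'ne
  rw [Finset.mem_filter] at hj₀ hj₁
  have hD0 : 0 ≤ D := by have := hD j₀ hj₀.1 j₀ hj₀.1; linarith
  rw [abs_le]
  constructor
  · have := sum_side_bound hfn (fun i => -y i) (-m) S hS D hD0 j₀ hj₀.1
      (by simpa using hj₀.2) (fun i hi => by have := hD i hi j₀ hj₀.1; simp; linarith)
      (by convert hA using 3 with i; simp)
    have e : ∑ i ∈ S, (-m - -y i) = -∑ i ∈ S, (m - y i) := by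
      rw [← Finset.sum_neg_distrib]; apply Finset.sum_congr rfl; intros; ring
    rw [e] at this; linarith
  · exact sum_side_bound hfn y m S hS D hD0 j₁ hj₁.1 hj₁.2
      (fun i hi => hD j₁ hj₁.1 i hi) hA'

/-- CWMed is `(f, (n/(2(n-f)))·min{2√(n-f), √d})`-resilient averaging when `f < n/2`. -/
theorem cwmed_resilient (n f d : ℕ) (hfn : 2 * f < n)
    (x : Fin n → EuclideanSpace ℝ (Fin d))
    (c : EuclideanSpace ℝ (Fin d))
    (hc : ∀ k : Fin d, IsMedian (fun i => x i k) (c k))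
    (S : Finset (Fin n)) (hS : S.card = n - f) :
    ‖c - (S.card : ℝ)⁻¹ • ∑ i ∈ S, x i‖ ≤
      ((n : ℝ) / (2 * ((n : ℝ) - f))) * min (2 * Real.sqrt ((n : ℝ) - f)) (Real.sqrt (d : ℝ)) *
        diam x S := by
  have hfn' : f ≤ n := by omega
  have hcard : (S.card : ℝ) = (n : ℝ) - f := by rw [hS, Nat.cast_sub hfn']
  have hpos : (0 : ℝ) < (n : ℝ) - f := by
    have h : (f : ℝ) < n := by exact_mod_cast (show f < n by omega)
    linarith
  have hScard0 : (0 : ℝ) < (S.card : ℝ) := by rw [hcard]; exact hpos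
  have hneS : S.Nonempty := by rw [← Finset.card_pos]; exact_mod_cast hScard0
  obtain ⟨i₀, hi₀⟩ := hneS
  have hne : S.Nonempty := ⟨i₀, hi₀⟩
  set D := diam x S with hDdef
  have hD0 : 0 ≤ D := NNReal.coe_nonneg _
  have hDnorm : ∀ i ∈ S, ∀ j ∈ S, ‖x i - x j‖ ≤ D := by
    intro i hi j hj
    have h := Finset.le_sup (f := fun p : Fin n × Fin n => ‖x p.1 - x p.2‖₊)
      (Finset.mk_mem_product hi hj)
    have h2 : ((‖x i - x j‖₊ : NNReal) : ℝ) ≤ D := NNReal.coe_le_coe.mpr h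
    simpa using h2
  -- coordinatewise diameters
  set Dk : Fin d → ℝ := fun k => S.sup' hne (fun i => x i k) - S.inf' hne (fun i => x i k)
    with hDk
  have hDkbd : ∀ k, ∀ i ∈ S, ∀ j ∈ S, x i k - x j k ≤ Dk k := fun k i hi j hj =>
    sub_le_sub (Finset.le_sup' (fun i => x i k) hi) (Finset.inf'_le (fun i => x i k) hj)
  have hDk0 : ∀ k, 0 ≤ Dk k := fun k => by
    have := hDkbd k i₀ hi₀ i₀ hi₀; linarith
  have hDkD : ∀ k, Dk k ≤ D := by
    intro k
    obtain ⟨a, ha, hea⟩ := Finset.exists_mem_eq_sup' hne (fun i => x i k)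
    obtain ⟨b, hb, heb⟩ := Finset.exists_mem_eq_inf' hne (fun i => x i k)
    have h1 : Dk k = x a k - x b k := by rw [hDk]; simp [← hea, ← heb]
    have h2 : |(x a - x b) k| ≤ ‖x a - x b‖ := abs_coord_le_norm _ _
    have h3 : (x a - x b) k = x a k - x b k := rfl
    rw [h3] at h2
    calc Dk k = x a k - x b k := h1
      _ ≤ |x a k - x b k| := le_abs_self _
      _ ≤ D := h2.trans (hDnorm a ha b hb)
  have hDksq : ∀ k, Dk k ^ 2 ≤ 4 * ∑ i ∈ S, (x i k - x i₀ k) ^ 2 := by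
    intro k
    obtain ⟨a, ha, hea⟩ := Finset.exists_mem_eq_sup' hne (fun i => x i k)
    obtain ⟨b, hb, heb⟩ := Finset.exists_mem_eq_inf' hne (fun i => x i k)
    have h1 : Dk k = x a k - x b k := by rw [hDk]; simp [← hea, ← heb]
    have h2 : (x a k - x i₀ k) ^ 2 ≤ ∑ i ∈ S, (x i k - x i₀ k) ^ 2 :=
      Finset.single_le_sum (f := fun i => (x i k - x i₀ k) ^ 2) (fun i _ => sq_nonneg _) ha
    have h3 : (x b k - x i₀ k) ^ 2 ≤ ∑ i ∈ S, (x i k - x i₀ k) ^ 2 :=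
      Finset.single_le_sum (f := fun i => (x i k - x i₀ k) ^ 2) (fun i _ => sq_nonneg _) hb
    rw [h1]; nlinarith [sq_nonneg ((x a k - x i₀ k) + (x b k - x i₀ k))]
  -- the coordinatewise averages and the coordinatewise bound
  set A : Fin d → ℝ := fun k => (S.card : ℝ)⁻¹ * ∑ i ∈ S, x i k with hA
  set lam : ℝ := (n : ℝ) / (2 * ((n : ℝ) - f)) with hlam
  have hlam0 : 0 ≤ lam := by
    rw [hlam]; apply div_nonneg (Nat.cast_nonneg n); linarith
  have hcoord : ∀ k, |c k - A k| ≤ lam * Dk k := by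
    intro k
    have hmb := median_sum_bound hfn (fun i => x i k) (c k) (hc k) S hS (Dk k)
      (fun i hi j hj => hDkbd k i hi j hj)
    have e : c k - A k = (S.card : ℝ)⁻¹ * ∑ i ∈ S, (c k - x i k) := by
      rw [hA, Finset.sum_sub_distrib, Finset.sum_const, nsmul_eq_mul]
      field_simp
    rw [e, abs_mul, abs_of_nonneg (inv_nonneg.mpr hScard0.le)]
    calc (S.card : ℝ)⁻¹ * |∑ i ∈ S, (c k - x i k)|
        ≤ (S.card : ℝ)⁻¹ * ((n : ℝ) / 2 * Dk k) :=
          mul_le_mul_of_nonneg_left hmb (inv_nonneg.mpr hScard0.le)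
      _ = lam * Dk k := by
          have hne0 : ((n : ℝ) - f) ≠ 0 := ne_of_gt hpos
          rw [hcard, hlam]
          generalize Dk k = t
          rw [inv_mul_eq_div, div_mul_eq_mul_div, div_div, div_mul_eq_mul_div]
  -- norm as coordinatewise sum
  have hnormeq : ‖c - (S.card : ℝ)⁻¹ • ∑ i ∈ S, x i‖
      = Real.sqrt (∑ k, (c k - A k) ^ 2) := by
    rw [EuclideanSpace.norm_eq]
    congr 1
    apply Finset.sum_congr rfl
    intro k _
    have hsum := euclid_sum_apply x S k
    have h : (c - (S.card : ℝ)⁻¹ • ∑ i ∈ S, x i) k = c k - A k := by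
      rw [hA, PiLp.sub_apply, PiLp.smul_apply, hsum, smul_eq_mul]
    rw [h, Real.norm_eq_abs, sq_abs]
  -- sum of squared coordinate errors
  have hsumsq : ∑ k, (c k - A k) ^ 2 ≤ lam ^ 2 * ∑ k, Dk k ^ 2 := by
    rw [Finset.mul_sum]
    apply Finset.sum_le_sum
    intro k _
    have h := pow_le_pow_left₀ (abs_nonneg _) (hcoord k) 2
    rw [sq_abs] at h
    calc (c k - A k) ^ 2 ≤ (lam * Dk k) ^ 2 := h
      _ = lam ^ 2 * Dk k ^ 2 := by ring
  -- the two bounds on ∑ Dk²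
  have bound1 : ∑ k, Dk k ^ 2 ≤ (Real.sqrt (d : ℝ) * D) ^ 2 := by
    have h : ∑ k, Dk k ^ 2 ≤ ∑ _k : Fin d, D ^ 2 :=
      Finset.sum_le_sum fun k _ => pow_le_pow_left₀ (hDk0 k) (hDkD k) 2
    rw [Finset.sum_const, Finset.card_univ, Fintype.card_fin, nsmul_eq_mul] at h
    calc ∑ k, Dk k ^ 2 ≤ (d : ℝ) * D ^ 2 := h
      _ = (Real.sqrt (d : ℝ) * D) ^ 2 := by
          rw [mul_pow, Real.sq_sqrt (Nat.cast_nonneg d)]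
  have bound2 : ∑ k, Dk k ^ 2 ≤ (2 * Real.sqrt ((n : ℝ) - f) * D) ^ 2 := by
    have hnormsq : ∀ i ∈ S, ∑ k, (x i k - x i₀ k) ^ 2 = ‖x i - x i₀‖ ^ 2 := by
      intro i _
      rw [EuclideanSpace.norm_eq, Real.sq_sqrt (Finset.sum_nonneg fun k _ => sq_nonneg _)]
      apply Finset.sum_congr rfl
      intro k _
      have h : (x i - x i₀) k = x i k - x i₀ k := rfl
      rw [h, Real.norm_eq_abs, sq_abs]
    calc ∑ k, Dk k ^ 2
        ≤ ∑ k, 4 * ∑ i ∈ S, (x i k - x i₀ k) ^ 2 :=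
          Finset.sum_le_sum fun k _ => hDksq k
      _ = 4 * ∑ i ∈ S, ∑ k, (x i k - x i₀ k) ^ 2 := by
          rw [← Finset.mul_sum, Finset.sum_comm]
      _ = 4 * ∑ i ∈ S, ‖x i - x i₀‖ ^ 2 := by
          rw [Finset.sum_congr rfl hnormsq]
      _ ≤ 4 * ∑ _i ∈ S, D ^ 2 := by
          apply mul_le_mul_of_nonneg_left _ (by norm_num)
          exact Finset.sum_le_sum fun i hi =>
            pow_le_pow_left₀ (norm_nonneg _) (hDnorm i hi i₀ hi₀) 2
      _ = (2 * Real.sqrt ((n : ℝ) - f) * D) ^ 2 := by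
          rw [Finset.sum_const, nsmul_eq_mul, hcard]
          rw [mul_pow, mul_pow, Real.sq_sqrt hpos.le]
          ring
  -- combine
  have hsqrtDk : Real.sqrt (∑ k, Dk k ^ 2)
      ≤ min (2 * Real.sqrt ((n : ℝ) - f)) (Real.sqrt (d : ℝ)) * D := by
    rw [min_mul_of_nonneg _ _ hD0]
    apply le_min
    · exact (Real.sqrt_le_sqrt bound2).trans_eq (Real.sqrt_sq (by positivity))
    · exact (Real.sqrt_le_sqrt bound1).trans_eq (Real.sqrt_sq (by positivity))
  rw [hnormeq]
  calc Real.sqrt (∑ k, (c k - A k) ^ 2)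
      ≤ Real.sqrt (lam ^ 2 * ∑ k, Dk k ^ 2) := Real.sqrt_le_sqrt hsumsq
    _ = lam * Real.sqrt (∑ k, Dk k ^ 2) := by
        rw [Real.sqrt_mul (sq_nonneg _), Real.sqrt_sq hlam0]
    _ ≤ lam * (min (2 * Real.sqrt ((n : ℝ) - f)) (Real.sqrt (d : ℝ)) * D) :=
        mul_le_mul_of_nonneg_left hsqrtDk hlam0
    _ = lam * min (2 * Real.sqrt ((n : ℝ) - f)) (Real.sqrt (d : ℝ)) * D := by ring
end

section
/- Let Q : ℝ^d → ℝ be differentiable with L-Lipschitz gradient. Consider the update θ_{t+1} = θ_t − γ(m̄_t + δ_t) with γ ≥ 0, and write ρ_t = m̄_t − ∇Q(θ_t). Then 2Q(θ_{t+1}) − 2Q(θ_t) ≤ −γ(1 − 4γL)‖∇Q(θ_t)‖² + 2γ(1 + 2γL)‖ρ_t‖² + 2γ(1 + γL)‖δ_t‖². -/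
open InnerProductSpace

/-- Descent lemma: quadratic upper bound for a function with `L`-Lipschitz gradient. -/
lemma descent_lemma {d : ℕ} {L : ℝ} (hL : 0 ≤ L)
    (Q : EuclideanSpace ℝ (Fin d) → ℝ)
    (g : EuclideanSpace ℝ (Fin d) → EuclideanSpace ℝ (Fin d))
    (hgrad : ∀ θ, HasGradientAt Q (g θ) θ)
    (hlip : ∀ θ θ' : EuclideanSpace ℝ (Fin d), ‖g θ - g θ'‖ ≤ L * ‖θ - θ'‖)
    (θ v : EuclideanSpace ℝ (Fin d)) :
    Q (θ + v) ≤ Q θ + inner ℝ (g θ) v + L / 2 * ‖v‖ ^ 2 := by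
  set c : ℝ → EuclideanSpace ℝ (Fin d) := fun t => θ + t • v with hc
  have hcderiv : ∀ t : ℝ, HasDerivAt c v t := fun t => by
    simpa [hc] using (((hasDerivAt_id t).smul_const v).const_add θ)
  have hfderiv : ∀ t : ℝ, HasDerivAt (fun t => Q (c t))
      ((inner ℝ (g (c t)) v : ℝ)) t := fun t => by
    have := ((hgrad (c t)).hasFDerivAt).comp_hasDerivAt t (hcderiv t)
    exact this
  have key : ∀ x ∈ Set.Icc (0:ℝ) 1, Q (c x) ≤
      Q θ + x * inner ℝ (g θ) v + L / 2 * x ^ 2 * ‖v‖ ^ 2 := by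
    have hB' : ∀ x : ℝ, HasDerivAt (fun x : ℝ => Q θ + x * (inner ℝ (g θ) v : ℝ)
        + L / 2 * x ^ 2 * ‖v‖ ^ 2) ((inner ℝ (g θ) v : ℝ) + L * x * ‖v‖ ^ 2) x := by
      intro x
      have := (((hasDerivAt_id x).mul_const (inner ℝ (g θ) v : ℝ)).const_add (Q θ)).add
        ((((hasDerivAt_pow 2 x).const_mul (L / 2)).mul_const (‖v‖ ^ 2)))
      refine this.congr_deriv ?_
      ring
    refine image_le_of_deriv_right_le_deriv_boundary
      (f' := fun t => (inner ℝ (g (c t)) v : ℝ))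
      (fun t _ => (hfderiv t).continuousAt.continuousWithinAt)
      (fun t _ => (hfderiv t).hasDerivWithinAt)
      (by simp [hc])
      (fun x _ => (hB' x).continuousAt.continuousWithinAt)
      (fun x _ => (hB' x).hasDerivWithinAt)
      ?_
    intro x hx
    have hsplit : (inner ℝ (g (c x)) v : ℝ) =
        inner ℝ (g θ) v + inner ℝ (g (c x) - g θ) v := by
      rw [inner_sub_left]; ring
    show (inner ℝ (g (c x)) v : ℝ) ≤ _
    rw [hsplit]
    have h2 : (inner ℝ (g (c x) - g θ) v : ℝ) ≤ ‖g (c x) - g θ‖ * ‖v‖ :=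
      real_inner_le_norm _ _
    have h3 : ‖g (c x) - g θ‖ ≤ L * (x * ‖v‖) := by
      have := hlip (c x) θ
      simpa [hc, norm_smul, abs_of_nonneg hx.1] using this
    have hv : (0:ℝ) ≤ ‖v‖ := norm_nonneg _
    nlinarith [h2, h3, mul_le_mul_of_nonneg_right h3 hv]
  have := key 1 (by norm_num)
  simpa [hc] using this

/-- Pointwise growth of the loss along the update `θ ↦ θ - γ(m̄ + δ)` for a function with
`L`-Lipschitz gradient. -/
theorem loss_growth (d : ℕ) (L γ : ℝ) (hL : 0 ≤ L) (hγ : 0 ≤ γ)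
    (Q : EuclideanSpace ℝ (Fin d) → ℝ)
    (g : EuclideanSpace ℝ (Fin d) → EuclideanSpace ℝ (Fin d))
    (hgrad : ∀ θ, HasGradientAt Q (g θ) θ)
    (hlip : ∀ θ θ' : EuclideanSpace ℝ (Fin d), ‖g θ - g θ'‖ ≤ L * ‖θ - θ'‖)
    (θt mbar δ : EuclideanSpace ℝ (Fin d)) :
    2 * Q (θt - γ • (mbar + δ)) - 2 * Q θt ≤
      -γ * (1 - 4 * γ * L) * ‖g θt‖ ^ 2 + 2 * γ * (1 + 2 * γ * L) * ‖mbar - g θt‖ ^ 2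
        + 2 * γ * (1 + γ * L) * ‖δ‖ ^ 2 := by
  set ρ : EuclideanSpace ℝ (Fin d) := mbar - g θt with hρ
  have hdesc := descent_lemma hL Q g hgrad hlip θt (-(γ • (mbar + δ)))
  have heq : θt + -(γ • (mbar + δ)) = θt - γ • (mbar + δ) := by abel
  rw [heq] at hdesc
  have hinner : (inner ℝ (g θt) (-(γ • (mbar + δ))) : ℝ) =
      -γ * (‖g θt‖ ^ 2 + inner ℝ (g θt) ρ + inner ℝ (g θt) δ) := by
    have : mbar + δ = g θt + ρ + δ := by rw [hρ]; abel
    rw [this, inner_neg_right, real_inner_smul_right, inner_add_right, inner_add_right,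
      real_inner_self_eq_norm_sq]
    ring
  have hnorm : ‖-(γ • (mbar + δ))‖ ^ 2 = γ ^ 2 * ‖g θt + ρ + δ‖ ^ 2 := by
    have : mbar + δ = g θt + ρ + δ := by rw [hρ]; abel
    rw [norm_neg, norm_smul, this]
    simp [mul_pow, sq_abs]
  -- bounds
  have hI1 : |(inner ℝ (g θt) ρ : ℝ)| ≤ ‖g θt‖ * ‖ρ‖ := abs_real_inner_le_norm _ _
  have hI2 : |(inner ℝ (g θt) δ : ℝ)| ≤ ‖g θt‖ * ‖δ‖ := abs_real_inner_le_norm _ _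
  have hS : ‖g θt + ρ + δ‖ ^ 2 ≤ 4 * ‖g θt‖ ^ 2 + 4 * ‖ρ‖ ^ 2 + 2 * ‖δ‖ ^ 2 := by
    have t1 : ‖g θt + ρ + δ‖ ≤ ‖g θt + ρ‖ + ‖δ‖ := norm_add_le _ _
    have t2 : ‖g θt + ρ‖ ≤ ‖g θt‖ + ‖ρ‖ := norm_add_le _ _
    have u1 : ‖g θt + ρ + δ‖ ^ 2 ≤ (‖g θt + ρ‖ + ‖δ‖) ^ 2 :=
      pow_le_pow_left₀ (norm_nonneg _) t1 2
    have u2 : ‖g θt + ρ‖ ^ 2 ≤ (‖g θt‖ + ‖ρ‖) ^ 2 :=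
      pow_le_pow_left₀ (norm_nonneg _) t2 2
    nlinarith [u1, u2, sq_nonneg (‖g θt + ρ‖ - ‖δ‖), sq_nonneg (‖g θt‖ - ‖ρ‖)]
  rw [hinner, hnorm] at hdesc
  have hγL : 0 ≤ γ * L := mul_nonneg hγ hL
  nlinarith [abs_le.mp hI1, abs_le.mp hI2, sq_nonneg (‖g θt‖ - 2 * ‖ρ‖),
    sq_nonneg (‖g θt‖ - 2 * ‖δ‖), mul_nonneg (mul_nonneg hγ hγ) hL,
    mul_nonneg hγ (sq_nonneg (‖g θt‖ - 2 * ‖ρ‖)), mul_nonneg hγ (sq_nonneg (‖g θt‖ - 2 * ‖δ‖)),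
    mul_le_mul_of_nonneg_left hS (mul_nonneg (mul_nonneg hγ hγ) hL)]
end
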